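/- arXiv:2601.17758 — 6 statements merged into one kernel-verified Lean document; each statement's English description precedes it below -/
import Mathlib

section
/- Let n ≥ 3, G = {G_1, ..., G_{2n-1}} be bipartite graphs on bipartition V = (X, Y) with X = {u_1, u_3, ..., u_{2n-3}, x}, Y = {u_2, u_4, ..., u_{2n-2}, y}, and C = u_1 u_2 ... u_{2n-2} u_1 a partial G-transversal cycle of order 2n-2 with φ(u_i u_{i+1}) = i. Let D be the auxiliary digraph with arcs ⋃_{u_i ∈ X\{x}} { (u_i, u) : u_i u ∈ E(G_i), u ≠ u_{i+1} }. If there exists an even k ∈ {2, 4, ..., 2n-2} such that d⁻_D(u_k) + |N_{G_k}(x) ∩ V(C)| ≥ n-1 and u_{k+1} y ∈ E(G_{2n-1}), then there exists a G-transversal isomorphic to a Hamiltonian path between x and y. -/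
open Finset

variable {V : Type*} [DecidableEq V]

/-- `v 0, …, v len` is a path whose `i`-th edge `v i – v (i+1)` lies in `G (φ i)`,
with pairwise distinct labels `φ i ∈ {1, …, s}`. -/
def IsRainbowPath (G : ℕ → SimpleGraph V) (s len : ℕ) (v : ℕ → V) (φ : ℕ → ℕ) : Prop :=
  Set.InjOn v (Set.Iic len) ∧ Set.InjOn φ (Set.Iio len) ∧
  (∀ i < len, 1 ≤ φ i ∧ φ i ≤ s) ∧
  ∀ i < len, (G (φ i)).Adj (v i) (v (i + 1))

/-- a rainbow (partial transversal) cycle with `len` edges. -/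
def IsRainbowCycle (G : ℕ → SimpleGraph V) (s len : ℕ) (v : ℕ → V) (φ : ℕ → ℕ) : Prop :=
  Set.InjOn v (Set.Iio len) ∧ v len = v 0 ∧ Set.InjOn φ (Set.Iio len) ∧
  (∀ i < len, 1 ≤ φ i ∧ φ i ≤ s) ∧
  ∀ i < len, (G (φ i)).Adj (v i) (v (i + 1))

/-- the collection `G 1, …, G s` has a (partial) transversal Hamiltonian path
on the `2n` vertices. -/
def HasRainbowHamPath (G : ℕ → SimpleGraph V) (s n : ℕ) : Prop :=
  ∃ v : ℕ → V, ∃ φ : ℕ → ℕ,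
    IsRainbowPath G s (2 * n - 1) v φ ∧ ∀ w : V, ∃ i ≤ 2 * n - 1, v i = w

/-- a transversal Hamiltonian path with endpoints `x` and `y`. -/
def HasRainbowHamPathBetween (G : ℕ → SimpleGraph V) (s n : ℕ) (x y : V) : Prop :=
  ∃ v : ℕ → V, ∃ φ : ℕ → ℕ,
    IsRainbowPath G s (2 * n - 1) v φ ∧ v 0 = x ∧ v (2 * n - 1) = y ∧
    ∀ w : V, ∃ i ≤ 2 * n - 1, v i = w

/-- every `G i`, `1 ≤ i ≤ s`, equals `K_{n/2,n/2} ∪ K_{n/2,n/2}` with respect to a common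
partition `X = X1 ∪ X2`, `Y = Y1 ∪ Y2`. -/
def AllTwoCompleteBip (G : ℕ → SimpleGraph V) (s n : ℕ) (X Y : Finset V) : Prop :=
  ∃ X1 X2 Y1 Y2 : Finset V,
    Disjoint X1 X2 ∧ Disjoint Y1 Y2 ∧ X1 ∪ X2 = X ∧ Y1 ∪ Y2 = Y ∧
    X1.card = n / 2 ∧ X2.card = n / 2 ∧ Y1.card = n / 2 ∧ Y2.card = n / 2 ∧
    ∀ i, 1 ≤ i → i ≤ s → ∀ a b : V,
      (G i).Adj a b ↔ ((a ∈ X1 ∧ b ∈ Y1) ∨ (b ∈ X1 ∧ a ∈ Y1) ∨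
                       (a ∈ X2 ∧ b ∈ Y2) ∨ (b ∈ X2 ∧ a ∈ Y2))

/-- the adjacency relation of the graph `F`: all edges from `xs` to `Y1 ∪ Y2`,
all edges from `ys` to `X1 ∪ X2`, and all edges between `Xj` and `Yj`, `j = 1, 2`. -/
def FAdj (xs ys : V) (X1 X2 Y1 Y2 : Finset V) (a b : V) : Prop :=
  (a = xs ∧ b ∈ Y1 ∪ Y2) ∨ (b = xs ∧ a ∈ Y1 ∪ Y2) ∨
  (a = ys ∧ b ∈ X1 ∪ X2) ∨ (b = ys ∧ a ∈ X1 ∪ X2) ∨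
  (a ∈ X1 ∧ b ∈ Y1) ∨ (b ∈ X1 ∧ a ∈ Y1) ∨
  (a ∈ X2 ∧ b ∈ Y2) ∨ (b ∈ X2 ∧ a ∈ Y2)

/-- `G0` is one of the exceptional graphs `F`, `F'` on the bipartition `(X, Y)`. -/
def IsFOrF' (G0 : SimpleGraph V) (X Y : Finset V) (n : ℕ) : Prop :=
  ∃ xs ys : V, ∃ X1 X2 Y1 Y2 : Finset V,
    xs ∈ X ∧ ys ∈ Y ∧ Disjoint X1 X2 ∧ Disjoint Y1 Y2 ∧
    xs ∉ X1 ∪ X2 ∧ ys ∉ Y1 ∪ Y2 ∧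
    insert xs (X1 ∪ X2) = X ∧ insert ys (Y1 ∪ Y2) = Y ∧
    X1.card = (n - 1) / 2 ∧ X2.card = (n - 1) / 2 ∧
    Y1.card = (n - 1) / 2 ∧ Y2.card = (n - 1) / 2 ∧
    ((∀ a b : V, G0.Adj a b ↔ FAdj xs ys X1 X2 Y1 Y2 a b) ∨
     (∀ a b : V, G0.Adj a b ↔
        (FAdj xs ys X1 X2 Y1 Y2 a b ∨ (a = xs ∧ b = ys) ∨ (a = ys ∧ b = xs))))

/-- in-degree of `w` in the auxiliary digraph `D`: the number of odd `i ∈ [1, 2n-3]`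
with `u i w ∈ E(G i)` and `w ≠ u (i+1)`. -/
noncomputable def inDegD (G : ℕ → SimpleGraph V) (n : ℕ) (u : ℕ → V) (w : V) : ℕ :=
  {i : ℕ | Odd i ∧ 1 ≤ i ∧ i ≤ 2 * n - 3 ∧ (G i).Adj (u i) w ∧ w ≠ u (i + 1)}.ncard


private def zcyc (m c : ℕ) : ℕ := (c - 1) % m + 1

private lemma zcyc_pos (m c : ℕ) : 1 ≤ zcyc m c := Nat.succ_le_succ (Nat.zero_le _)

private lemma zcyc_le {m : ℕ} (hm : 0 < m) (c : ℕ) : zcyc m c ≤ m :=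
  Nat.succ_le_of_lt (Nat.mod_lt _ hm)

private lemma zcyc_eq_self {m c : ℕ} (h1 : 1 ≤ c) (h2 : c ≤ m) : zcyc m c = c := by
  unfold zcyc
  rw [Nat.mod_eq_of_lt (by omega)]
  omega

private lemma zcyc_add_m {m c : ℕ} (h : 1 ≤ c) : zcyc m (c + m) = zcyc m c := by
  unfold zcyc
  rw [show c + m - 1 = (c - 1) + m by omega, Nat.add_mod_right]

private lemma zcyc_modeq {m : ℕ} (c : ℕ) (h : 1 ≤ c) : zcyc m c ≡ c [MOD m] := by
  have h2 := (Nat.mod_modEq (c - 1) m).add_right 1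
  simpa [zcyc, show c - 1 + 1 = c by omega] using h2

private lemma zcyc_congr {m c c' : ℕ} (h : c ≡ c' [MOD m]) (h1 : 1 ≤ c) (h2 : 1 ≤ c') :
    zcyc m c = zcyc m c' := by
  have e1 : (c - 1) + 1 ≡ (c' - 1) + 1 [MOD m] := by
    simpa [show c - 1 + 1 = c by omega, show c' - 1 + 1 = c' by omega] using h
  have e2 : (c - 1) % m = (c' - 1) % m := Nat.ModEq.add_right_cancel' 1 e1
  unfold zcyc
  omega

private lemma zcyc_inj {m z s t : ℕ} (hm : 0 < m) (hz : 1 ≤ z) (hs : s < m) (ht : t < m)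
    (h : zcyc m (z + s) = zcyc m (z + t)) : s = t := by
  unfold zcyc at h
  have h1 : (z + s - 1) % m = (z + t - 1) % m := by omega
  have h2 : ((z - 1) + s) % m = ((z - 1) + t) % m := by
    rwa [show z - 1 + s = z + s - 1 by omega, show z - 1 + t = z + t - 1 by omega]
  have h3 : s % m = t % m := Nat.ModEq.add_left_cancel' (z - 1) h2
  rw [Nat.mod_eq_of_lt hs, Nat.mod_eq_of_lt ht] at h3
  exact h3

private lemma zcyc_succ_lt {m c : ℕ} (hm : 0 < m) (hc : 1 ≤ c) (h : zcyc m c < m) :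
    zcyc m (c + 1) = zcyc m c + 1 := by
  unfold zcyc at h ⊢
  rw [Nat.add_sub_cancel]
  have hq := Nat.div_add_mod (c - 1) m
  have hc2 : c = ((c - 1) % m + 1) + m * ((c - 1) / m) := by omega
  have hmod : c % m = (c - 1) % m + 1 := by
    conv_lhs => rw [hc2]
    rw [Nat.add_mul_mod_self_left, Nat.mod_eq_of_lt h]
  rw [hmod]

private lemma zcyc_succ_eq {m c : ℕ} (hm : 0 < m) (hc : 1 ≤ c) (h : zcyc m c = m) :
    zcyc m (c + 1) = 1 := by
  unfold zcyc at h ⊢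
  rw [Nat.add_sub_cancel]
  have hq := Nat.div_add_mod (c - 1) m
  have hq2 : m * ((c - 1) / m + 1) = m * ((c - 1) / m) + m := by ring
  have hc2 : c = 0 + m * ((c - 1) / m + 1) := by omega
  have hmod : c % m = 0 := by
    conv_lhs => rw [hc2]
    rw [Nat.add_mul_mod_self_left, Nat.zero_mod]
  rw [hmod]

private def gfun (a m t : ℕ) : ℕ := if t ≤ a + 1 then t else a + 2 + m - t

private def hfun (a m t : ℕ) : ℕ :=
  if t = 0 then a + 1 else if t ≤ a then t else if t = a + 1 then 0 else a + 1 + m - t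

private lemma gfun_bounds {a m t : ℕ} (ha : a ≤ m - 2) (hm : 2 ≤ m) (h1 : 1 ≤ t) (h2 : t ≤ m) :
    1 ≤ gfun a m t ∧ gfun a m t ≤ m := by unfold gfun; split_ifs <;> omega

private lemma gfun_inj {a m t t' : ℕ} (ha : a ≤ m - 2) (h1 : 1 ≤ t) (h2 : t ≤ m)
    (h1' : 1 ≤ t') (h2' : t' ≤ m) (h : gfun a m t = gfun a m t') : t = t' := by
  unfold gfun at h; split_ifs at h <;> omega

private lemma hfun_le {a m t : ℕ} (ha : a ≤ m - 2) (hm : 2 ≤ m) (h2 : t ≤ m - 1) :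
    hfun a m t ≤ m - 1 := by unfold hfun; split_ifs <;> omega

private lemma hfun_inj {a m t t' : ℕ} (ha : a ≤ m - 2) (h2 : t ≤ m - 1) (h2' : t' ≤ m - 1)
    (h : hfun a m t = hfun a m t') : t = t' := by
  unfold hfun at h; split_ifs at h <;> omega

private def vfun {V : Type*} (u : ℕ → V) (x y : V) (m i a : ℕ) (t : ℕ) : V :=
  if t = 0 then x else if t ≤ m then u (zcyc m (i + gfun a m t)) else y

private def pfun (m i a t : ℕ) : ℕ :=
  if t ≤ m - 1 then zcyc m (i + hfun a m t) else m + 1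

private lemma vfun_zero {V : Type*} (u : ℕ → V) (x y : V) (m i a : ℕ) :
    vfun u x y m i a 0 = x := by unfold vfun; simp

private lemma vfun_mid {V : Type*} (u : ℕ → V) (x y : V) (m i a : ℕ) {t : ℕ}
    (h1 : 1 ≤ t) (h2 : t ≤ m) : vfun u x y m i a t = u (zcyc m (i + gfun a m t)) := by
  unfold vfun; rw [if_neg (by omega), if_pos h2]

private lemma vfun_top {V : Type*} (u : ℕ → V) (x y : V) (m i a : ℕ) {t : ℕ}
    (h : m < t) : vfun u x y m i a t = y := by
  unfold vfun; rw [if_neg (by omega), if_neg (by omega)]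

private lemma pfun_low {m i a t : ℕ} (h : t ≤ m - 1) :
    pfun m i a t = zcyc m (i + hfun a m t) := if_pos h

private lemma pfun_high {m i a t : ℕ} (h : ¬ t ≤ m - 1) : pfun m i a t = m + 1 := if_neg h

private lemma construct {V : Type*} [DecidableEq V] (G : ℕ → SimpleGraph V) (u : ℕ → V)
    (x y : V) (m : ℕ) (hm4 : 4 ≤ m)
    (huinj : Set.InjOn u (Set.Icc 1 m))
    (hxy : x ≠ y)
    (hux : ∀ j, 1 ≤ j → j ≤ m → u j ≠ x ∧ u j ≠ y)
    (hucov : ∀ w, w = x ∨ w = y ∨ ∃ j, 1 ≤ j ∧ j ≤ m ∧ u j = w)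
    (hC : ∀ c, 1 ≤ c → c ≤ m - 1 → (G c).Adj (u c) (u (c + 1)))
    (hC2 : (G m).Adj (u m) (u 1))
    (k i : ℕ) (hk1 : 2 ≤ k) (hk2 : k ≤ m) (hi1 : 1 ≤ i) (hi2 : i ≤ m - 1) (hik : i ≠ k)
    (hA : (G i).Adj (u i) (u k)) (hB : (G k).Adj x (u (i + 1)))
    (hadj : (G (m + 1)).Adj (u (k % m + 1)) y) :
    ∃ v : ℕ → V, ∃ φ : ℕ → ℕ,
      (Set.InjOn v (Set.Iic (m + 1)) ∧ Set.InjOn φ (Set.Iio (m + 1)) ∧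
       (∀ t < m + 1, 1 ≤ φ t ∧ φ t ≤ m + 1) ∧
       ∀ t < m + 1, (G (φ t)).Adj (v t) (v (t + 1))) ∧
      v 0 = x ∧ v (m + 1) = y ∧ ∀ w, ∃ t ≤ m + 1, v t = w := by
  have hm0 : 0 < m := by omega
  -- set up a
  obtain ⟨d, hddef⟩ : ∃ d, d = k + m - (i + 1) := ⟨_, rfl⟩
  have hd : i + 1 + d = k + m := by omega
  obtain ⟨a, hadef⟩ : ∃ a, a = d % m := ⟨_, rfl⟩
  obtain ⟨q, hqdef⟩ : ∃ q, q = d / m := ⟨_, rfl⟩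
  have hdq : m * q + a = d := by rw [hqdef, hadef]; exact Nat.div_add_mod d m
  have halt : a < m := hadef ▸ Nat.mod_lt _ hm0
  have hq1 : q ≤ 1 := by
    by_contra hq2
    have : m * 2 ≤ m * q := Nat.mul_le_mul_left m (by omega)
    omega
  have hia : i + 1 + a = k ∨ i + 1 + a = k + m := by
    have h01 : q = 0 ∨ q = 1 := by omega
    rcases h01 with h | h <;> rw [h] at hdq <;> omega
  have ham : a ≤ m - 2 := by
    rcases hia with h | h <;> omega
  -- key computed values
  have hzk : zcyc m (i + (a + 1)) = k := by
    rcases hia with h | h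
    · rw [show i + (a + 1) = k by omega]; exact zcyc_eq_self (by omega) (by omega)
    · rw [show i + (a + 1) = k + m by omega, zcyc_add_m (by omega)]
      exact zcyc_eq_self (by omega) (by omega)
  have hzi : zcyc m (i + 0) = i := by
    rw [Nat.add_zero]; exact zcyc_eq_self hi1 (by omega)
  have hstep : ∀ c, 1 ≤ c → (G (zcyc m c)).Adj (u (zcyc m c)) (u (zcyc m (c + 1))) := by
    intro c hc
    rcases lt_or_eq_of_le (zcyc_le hm0 c) with h | h
    · rw [zcyc_succ_lt hm0 hc h]
      exact hC _ (zcyc_pos m c) (by omega)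
    · rw [zcyc_succ_eq hm0 hc h, h]
      exact hC2
  -- distinctness of middle vertices from x, y
  have hvne : ∀ t, 1 ≤ t → t ≤ m → vfun u x y m i a t ≠ x ∧ vfun u x y m i a t ≠ y := by
    intro t h1 h2
    rw [vfun_mid u x y m i a h1 h2]
    exact hux _ (zcyc_pos m _) (zcyc_le hm0 _)
  refine ⟨vfun u x y m i a, pfun m i a, ⟨?_, ?_, ?_, ?_⟩, vfun_zero u x y m i a,
    vfun_top u x y m i a (by omega), ?_⟩
  · -- InjOn v
    intro t ht t' ht' h
    simp only [Set.mem_Iic] at ht ht'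
    by_cases h0 : t = 0 <;> by_cases h0' : t' = 0
    · omega
    · exfalso
      subst h0
      rw [vfun_zero] at h
      by_cases hq : t' ≤ m
      · exact (hvne t' (by omega) hq).1 h.symm
      · rw [vfun_top u x y m i a (by omega)] at h; exact hxy h
    · exfalso
      subst h0'
      rw [vfun_zero] at h
      by_cases hq : t ≤ m
      · exact (hvne t (by omega) hq).1 h
      · rw [vfun_top u x y m i a (by omega)] at h; exact hxy h.symm
    · by_cases hq : t ≤ m <;> by_cases hq' : t' ≤ m
      · rw [vfun_mid u x y m i a (by omega) hq, vfun_mid u x y m i a (by omega) hq'] at h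
        have hb := gfun_bounds (t := t) ham (by omega) (by omega) hq
        have hb' := gfun_bounds (t := t') ham (by omega) (by omega) hq'
        have e1 : zcyc m (i + gfun a m t) = zcyc m (i + gfun a m t') :=
          huinj (Set.mem_Icc.mpr ⟨zcyc_pos m _, zcyc_le hm0 _⟩)
            (Set.mem_Icc.mpr ⟨zcyc_pos m _, zcyc_le hm0 _⟩) h
        have e2 : zcyc m ((i + 1) + (gfun a m t - 1)) = zcyc m ((i + 1) + (gfun a m t' - 1)) := by
          rw [show (i + 1) + (gfun a m t - 1) = i + gfun a m t by omega,
            show (i + 1) + (gfun a m t' - 1) = i + gfun a m t' by omega]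
          exact e1
        have e3 := zcyc_inj hm0 (by omega) (by omega) (by omega) e2
        exact gfun_inj ham (by omega) hq (by omega) hq' (by omega)
      · exfalso
        rw [vfun_top u x y m i a (t := t') (by omega)] at h
        exact (hvne t (by omega) hq).2 h
      · exfalso
        rw [vfun_top u x y m i a (t := t) (by omega)] at h
        exact (hvne t' (by omega) hq').2 h.symm
      · omega
  · -- InjOn φ
    intro t ht t' ht' h
    simp only [Set.mem_Iio] at ht ht'
    by_cases c1 : t ≤ m - 1 <;> by_cases c1' : t' ≤ m - 1
    · rw [pfun_low c1, pfun_low c1'] at h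
      have l1 := hfun_le (t := t) ham (by omega) c1
      have l2 := hfun_le (t := t') ham (by omega) c1'
      have := zcyc_inj hm0 hi1 (show hfun a m t < m by omega) (show hfun a m t' < m by omega) h
      exact hfun_inj ham c1 c1' this
    · exfalso
      rw [pfun_low c1, pfun_high c1'] at h
      have := zcyc_le hm0 (i + hfun a m t)
      omega
    · exfalso
      rw [pfun_high c1, pfun_low c1'] at h
      have := zcyc_le hm0 (i + hfun a m t')
      omega
    · omega
  · -- bounds
    intro t ht
    by_cases c1 : t ≤ m - 1
    · rw [pfun_low c1]
      exact ⟨zcyc_pos m _, le_trans (zcyc_le hm0 _) (by omega)⟩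
    · rw [pfun_high c1]
      omega
  · -- edges
    intro t ht
    by_cases h0 : t = 0
    · subst h0
      rw [pfun_low (show 0 ≤ m - 1 by omega), show hfun a m 0 = a + 1 from rfl, hzk,
        vfun_zero, vfun_mid u x y m i a (le_refl 1) (by omega),
        show gfun a m 1 = 1 from if_pos (by omega),
        zcyc_eq_self (by omega) (by omega)]
      exact hB
    · by_cases h1 : t ≤ a
      · rw [pfun_low (show t ≤ m - 1 by omega)]
        have eh : hfun a m t = t := by unfold hfun; rw [if_neg h0, if_pos h1]
        rw [eh, vfun_mid u x y m i a (by omega) (by omega),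
          vfun_mid u x y m i a (by omega) (by omega),
          show gfun a m t = t from if_pos (by omega),
          show gfun a m (t + 1) = t + 1 from if_pos (by omega),
          show i + (t + 1) = (i + t) + 1 by omega]
        exact hstep (i + t) (by omega)
      · by_cases h2 : t = a + 1
        · subst h2
          have eh : hfun a m (a + 1) = 0 := by
            unfold hfun; rw [if_neg (by omega), if_neg (by omega), if_pos rfl]
          rw [pfun_low (show a + 1 ≤ m - 1 by omega), eh, hzi,
            vfun_mid u x y m i a (by omega) (by omega),
            vfun_mid u x y m i a (by omega) (by omega),
            show gfun a m (a + 1) = a + 1 from if_pos (le_refl _), hzk,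
            show gfun a m (a + 1 + 1) = m from by
              unfold gfun; rw [if_neg (by omega)]; omega]
          rw [show i + m = i + m by rfl, zcyc_add_m hi1, zcyc_eq_self hi1 (by omega)]
          exact hA.symm
        · by_cases h3 : t ≤ m - 1
          · -- a+2 ≤ t ≤ m-1
            have eh : hfun a m t = a + 1 + m - t := by
              unfold hfun; rw [if_neg h0, if_neg h1, if_neg h2]
            rw [pfun_low h3, eh,
              vfun_mid u x y m i a (by omega) (by omega),
              vfun_mid u x y m i a (by omega) (by omega),
              show gfun a m t = a + 2 + m - t from if_neg (by omega),
              show gfun a m (t + 1) = a + 1 + m - t from by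
                unfold gfun; rw [if_neg (by omega)]; omega,
              show i + (a + 2 + m - t) = (i + (a + 1 + m - t)) + 1 by omega]
            exact (hstep (i + (a + 1 + m - t)) (by omega)).symm
          · -- t = m
            have htm : t = m := by omega
            rw [htm]
            have eg : gfun a m m = a + 2 := by unfold gfun; rw [if_neg (by omega)]; omega
            rw [pfun_high (by omega), vfun_mid u x y m i a (by omega) (le_refl m), eg,
              vfun_top u x y m i a (by omega)]
            have e1 : zcyc m (i + (a + 2)) = zcyc m (k + 1) := by
              rcases hia with h | h
              · rw [show i + (a + 2) = k + 1 by omega]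
              · rw [show i + (a + 2) = (k + 1) + m by omega, zcyc_add_m (by omega)]
            have e2 : zcyc m (k + 1) = k % m + 1 := by
              unfold zcyc; rw [Nat.add_sub_cancel]
            rw [e1, e2]
            exact hadj
  · -- coverage
    intro w
    rcases hucov w with hw | hw | ⟨j, hj1, hj2, hj3⟩
    · exact ⟨0, by omega, (vfun_zero u x y m i a).trans hw.symm⟩
    · exact ⟨m + 1, le_refl _, (vfun_top u x y m i a (by omega)).trans hw.symm⟩
    · set s := zcyc m (j + m - i) with hsdef
      have hs1 : 1 ≤ s := zcyc_pos m _
      have hs2 : s ≤ m := zcyc_le hm0 _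
      have hzs : zcyc m (i + s) = j := by
        have m1 : s ≡ j + m - i [MOD m] := zcyc_modeq _ (by omega)
        have m2 : i + s ≡ i + (j + m - i) [MOD m] := Nat.ModEq.add_left i m1
        have m3 : i + (j + m - i) = j + m := by omega
        rw [m3] at m2
        rw [zcyc_congr m2 (by omega) (by omega), zcyc_add_m (by omega)]
        exact zcyc_eq_self hj1 hj2
      by_cases hs : s ≤ a + 1
      · refine ⟨s, by omega, ?_⟩
        rw [vfun_mid u x y m i a hs1 hs2, show gfun a m s = s from if_pos hs, hzs]
        exact hj3
      · refine ⟨a + 2 + m - s, by omega, ?_⟩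
        rw [vfun_mid u x y m i a (by omega) (by omega),
          show gfun a m (a + 2 + m - s) = s from by
            unfold gfun; rw [if_neg (by omega)]; omega, hzs]
        exact hj3

theorem stmt3 (n : ℕ) (hn : 3 ≤ n) (G : ℕ → SimpleGraph V) (X Y : Finset V)
    (hdisj : Disjoint X Y) (hcov : ∀ w : V, w ∈ X ∨ w ∈ Y)
    (hX : X.card = n) (hY : Y.card = n)
    (hbip : ∀ i, 1 ≤ i → i ≤ 2 * n - 1 → ∀ a b : V, (G i).Adj a b →
      (a ∈ X ∧ b ∈ Y) ∨ (a ∈ Y ∧ b ∈ X))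
    (u : ℕ → V) (x y : V)
    (huinj : Set.InjOn u (Set.Icc 1 (2 * n - 2)))
    (hxX : x ∈ X) (hyY : y ∈ Y)
    (huxy : ∀ i, 1 ≤ i → i ≤ 2 * n - 2 → u i ≠ x ∧ u i ≠ y)
    (hupar : ∀ i, 1 ≤ i → i ≤ 2 * n - 2 → (Odd i → u i ∈ X) ∧ (Even i → u i ∈ Y))
    (hucov : ∀ w : V, w = x ∨ w = y ∨ ∃ i, 1 ≤ i ∧ i ≤ 2 * n - 2 ∧ u i = w)
    (hC : ∀ i, 1 ≤ i → i ≤ 2 * n - 3 → (G i).Adj (u i) (u (i + 1)))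
    (hC2 : (G (2 * n - 2)).Adj (u (2 * n - 2)) (u 1))
    (k : ℕ) (hke : Even k) (hk1 : 2 ≤ k) (hk2 : k ≤ 2 * n - 2)
    (hsum : n - 1 ≤ inDegD G n u (u k) +
      ((G k).neighborSet x ∩ (u '' Set.Icc 1 (2 * n - 2))).ncard)
    (hadj : (G (2 * n - 1)).Adj (u (k % (2 * n - 2) + 1)) y) :
    HasRainbowHamPathBetween G (2 * n - 1) n x y := by
  classical
  have hxy : x ≠ y := by
    intro h
    rw [← h] at hyY
    exact Finset.disjoint_left.mp hdisj hxX hyY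
  have hclaim : ∃ i, Odd i ∧ 1 ≤ i ∧ i ≤ 2 * n - 3 ∧ (G i).Adj (u i) (u k) ∧
      (G k).Adj x (u (i + 1)) := by
    by_contra hcon
    push_neg at hcon
    have hke2 : k % 2 = 0 := Nat.even_iff.mp hke
    have hnxk : ¬ (G k).Adj x (u k) := by
      intro hax
      have hadjC : (G (k - 1)).Adj (u (k - 1)) (u k) := by
        have := hC (k - 1) (by omega) (by omega)
        rwa [show k - 1 + 1 = k by omega] at this
      exact hcon (k - 1) (Nat.odd_iff.mpr (by omega)) (by omega) (by omega) hadjC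
        (by rw [show k - 1 + 1 = k by omega]; exact hax)
    set S : Finset ℕ := (Finset.Icc 1 (2 * n - 3)).filter
      (fun i => Odd i ∧ (G i).Adj (u i) (u k) ∧ u k ≠ u (i + 1)) with hSdef
    set T : Finset ℕ := (Finset.Icc 1 (2 * n - 2)).filter (fun j => (G k).Adj x (u j)) with hTdef
    have hS : inDegD G n u (u k) = S.card := by
      have he : {i : ℕ | Odd i ∧ 1 ≤ i ∧ i ≤ 2 * n - 3 ∧ (G i).Adj (u i) (u k) ∧
          u k ≠ u (i + 1)} = ↑S := by
        ext j
        rw [Set.mem_setOf_eq, Finset.mem_coe, hSdef, Finset.mem_filter, Finset.mem_Icc]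
        tauto
      unfold inDegD
      rw [he, Set.ncard_coe_finset]
    have hTsub : ∀ j ∈ T, 1 ≤ j ∧ j ≤ 2 * n - 2 := by
      intro j hj
      rw [hTdef, Finset.mem_filter, Finset.mem_Icc] at hj
      exact hj.1
    have hT : ((G k).neighborSet x ∩ (u '' Set.Icc 1 (2 * n - 2))).ncard = T.card := by
      have hinj : Set.InjOn u ↑T := fun j hj j' hj' h =>
        huinj (Set.mem_Icc.mpr (hTsub j (Finset.mem_coe.mp hj)))
          (Set.mem_Icc.mpr (hTsub j' (Finset.mem_coe.mp hj'))) h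
      have he : (G k).neighborSet x ∩ (u '' Set.Icc 1 (2 * n - 2)) = ↑(T.image u) := by
        ext w
        simp only [Set.mem_inter_iff, SimpleGraph.mem_neighborSet, Set.mem_image,
          Set.mem_Icc, Finset.coe_image, Finset.mem_coe, hTdef, Finset.mem_filter,
          Finset.mem_Icc]
        constructor
        · rintro ⟨ha, j, hj, rfl⟩
          exact ⟨j, ⟨⟨hj.1, hj.2⟩, ha⟩, rfl⟩
        · rintro ⟨j, ⟨hj, ha⟩, rfl⟩
          exact ⟨ha, j, hj, rfl⟩
      rw [he, Set.ncard_coe_finset, Finset.card_image_of_injOn hinj]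
    rw [hS, hT] at hsum
    set O : Finset ℕ := (Finset.range (n - 1)).image (fun r => 2 * r + 1) with hOdef
    have hOcard : O.card = n - 1 := by
      rw [hOdef, Finset.card_image_of_injective _ (fun p q h => by omega), Finset.card_range]
    have hkO : k - 1 ∈ O := by
      rw [hOdef]
      exact Finset.mem_image.mpr ⟨k / 2 - 1, Finset.mem_range.mpr (by omega), by omega⟩
    have hTmem : ∀ j ∈ T, 1 ≤ j ∧ j ≤ 2 * n - 2 ∧ (G k).Adj x (u j) ∧ Even j ∧ j ≠ k := by
      intro j hj
      rw [hTdef, Finset.mem_filter, Finset.mem_Icc] at hj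
      obtain ⟨⟨h1, h2⟩, ha⟩ := hj
      have hY : u j ∈ Y := by
        rcases hbip k (by omega) (by omega) x (u j) ha with ⟨_, h⟩ | ⟨hxY, _⟩
        · exact h
        · exact absurd hxY (Finset.disjoint_left.mp hdisj hxX)
      have hev : Even j := by
        rcases Nat.even_or_odd j with he | ho
        · exact he
        · exact absurd hY (Finset.disjoint_left.mp hdisj ((hupar j h1 h2).1 ho))
      have hne : j ≠ k := by
        intro h
        rw [h] at ha
        exact hnxk ha
      exact ⟨h1, h2, ha, hev, hne⟩
    set T' : Finset ℕ := T.image (fun j => j - 1) with hT'def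
    have hT'card : T'.card = T.card := by
      rw [hT'def]
      apply Finset.card_image_of_injOn
      intro j hj j' hj' h
      have g1 := hTsub j (Finset.mem_coe.mp hj)
      have g2 := hTsub j' (Finset.mem_coe.mp hj')
      replace h : j - 1 = j' - 1 := h
      omega
    have hsub : S ∪ T' ⊆ O.erase (k - 1) := by
      intro j hj
      rw [Finset.mem_union] at hj
      rw [Finset.mem_erase, hOdef]
      rcases hj with hj | hj
      · rw [hSdef, Finset.mem_filter, Finset.mem_Icc] at hj
        obtain ⟨⟨h1, h2⟩, hodd, hadj1, hne⟩ := hj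
        obtain ⟨r, hr⟩ := hodd
        refine ⟨?_, Finset.mem_image.mpr ⟨r, Finset.mem_range.mpr (by omega), by omega⟩⟩
        intro h
        exact hne (by rw [show j + 1 = k by omega])
      · rw [hT'def] at hj
        obtain ⟨j', hj', hje⟩ := Finset.mem_image.mp hj
        replace hje : j' - 1 = j := hje
        obtain ⟨h1, h2, ha, hev, hne⟩ := hTmem j' hj'
        obtain ⟨s, hs⟩ := hev
        exact ⟨by omega, Finset.mem_image.mpr ⟨s - 1, Finset.mem_range.mpr (by omega), by omega⟩⟩
    have hdisjST : Disjoint S T' := by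
      rw [Finset.disjoint_left]
      intro j hjS hjT'
      rw [hSdef, Finset.mem_filter, Finset.mem_Icc] at hjS
      obtain ⟨⟨h1, h2⟩, hodd, hadj1, hne⟩ := hjS
      rw [hT'def] at hjT'
      obtain ⟨j', hj', hje⟩ := Finset.mem_image.mp hjT'
      replace hje : j' - 1 = j := hje
      obtain ⟨g1, g2, ga, gev, gne⟩ := hTmem j' hj'
      have hjj : j' = j + 1 := by omega
      rw [hjj] at ga
      exact hcon j hodd h1 h2 hadj1 ga
    have hcard : (S ∪ T').card ≤ (O.erase (k - 1)).card := Finset.card_le_card hsub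
    rw [Finset.card_union_of_disjoint hdisjST, hT'card, Finset.card_erase_of_mem hkO,
      hOcard] at hcard
    omega
  obtain ⟨i, hio, hi1, hi2, hA, hB⟩ := hclaim
  have hik : i ≠ k := by
    have h1 := Nat.odd_iff.mp hio
    have h2 := Nat.even_iff.mp hke
    omega
  have hC' : ∀ c, 1 ≤ c → c ≤ 2 * n - 2 - 1 → (G c).Adj (u c) (u (c + 1)) :=
    fun c h1 h2 => hC c h1 (by omega)
  have hadj' : (G (2 * n - 2 + 1)).Adj (u (k % (2 * n - 2) + 1)) y := by
    rw [show 2 * n - 2 + 1 = 2 * n - 1 by omega]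
    exact hadj
  obtain ⟨v, φ, h1, h2, h3, h4⟩ := construct G u x y (2 * n - 2) (by omega) huinj hxy
    (fun j a b => huxy j a b) hucov hC' hC2 k i hk1 hk2 hi1 (by omega) hik hA hB hadj'
  have e : 2 * n - 1 = 2 * n - 2 + 1 := by omega
  refine ⟨v, φ, ?_, h2, ?_, ?_⟩
  · rw [IsRainbowPath, e]
    exact h1
  · rw [e]
    exact h3
  · rw [e]
    exact h4
end

section
/- Let X = {v_1, v_3, ..., v_{2n-1}}, Y = {v_2, v_4, ..., v_{2n}}, and G = {G_1, ..., G_{2n-1}} a collection of bipartite graphs on (X, Y) with δ(G_i) ≥ ⌈n/2⌉ for all i. Let P* = v_1 v_2 ... v_{2n-2} be a partial G-transversal path with injection ψ: E(P*) → [2n-1], and {l_1, l_2} = [2n-1] \ im(ψ). If G contains no partial transversal isomorphic to a cycle of order 2n-2, then: (c1) if v_1 v_{2n} ∉ E(G_{l_1}), then v_{2n-2} v_{2n-1} ∈ E(G_{l_2}); and (c2) if v_{2n-2} v_{2n-1} ∉ E(G_{l_1}), then v_1 v_{2n} ∈ E(G_{l_2}). -/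
open Finset

variable {V : Type*} [DecidableEq V]

set_option linter.unusedSectionVars false in
lemma cycA (n : ℕ) (hn : 3 ≤ n) (G : ℕ → SimpleGraph V)
    (w : ℕ → V) (hwinj : Set.InjOn w (Set.Icc 1 (2*n)))
    (ψ : ℕ → ℕ) (hψinj : Set.InjOn ψ (Set.Icc 1 (2*n-3)))
    (hψran : ∀ i, 1 ≤ i → i ≤ 2*n-3 → 1 ≤ ψ i ∧ ψ i ≤ 2*n-1)
    (hψadj : ∀ i, 1 ≤ i → i ≤ 2*n-3 → (G (ψ i)).Adj (w i) (w (i+1)))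
    (l : ℕ) (hl : 1 ≤ l ∧ l ≤ 2*n-1) (hlnot : ∀ i, 1 ≤ i → i ≤ 2*n-3 → ψ i ≠ l)
    (hadj : (G l).Adj (w (2*n-2)) (w 1)) :
    ∃ v : ℕ → V, ∃ φ : ℕ → ℕ, IsRainbowCycle G (2*n-1) (2*n-2) v φ := by
  refine ⟨fun i => if i < 2*n-2 then w (i+1) else w 1,
         fun i => if i < 2*n-3 then ψ (i+1) else l, ?_, ?_, ?_, ?_, ?_⟩
  · intro a ha b hb hab
    simp only [Set.mem_Iio] at ha hb
    simp only [if_pos ha, if_pos hb] at hab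
    have := hwinj ⟨by omega, by omega⟩ (⟨by omega, by omega⟩ : b+1 ∈ Set.Icc 1 (2*n)) hab
    omega
  · simp only [if_neg (lt_irrefl _), if_pos (by omega : 0 < 2*n-2)]
  · intro a ha b hb hab
    simp only [Set.mem_Iio] at ha hb
    simp only at hab
    split_ifs at hab with h1 h2 h2
    · have := hψinj (⟨by omega, by omega⟩ : a+1 ∈ Set.Icc 1 (2*n-3))
        (⟨by omega, by omega⟩ : b+1 ∈ Set.Icc 1 (2*n-3)) hab
      omega
    · exact absurd hab (hlnot _ (by omega) (by omega))
    · exact absurd hab.symm (hlnot _ (by omega) (by omega))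
    · omega
  · intro i hi
    simp only
    split_ifs with h
    · exact hψran _ (by omega) (by omega)
    · exact hl
  · intro i hi
    simp only
    rcases lt_or_ge i (2*n-3) with h | h
    · rw [if_pos h, if_pos (by omega : i < 2*n-2), if_pos (by omega : i+1 < 2*n-2)]
      exact hψadj _ (by omega) (by omega)
    · have h3 : i = 2*n-3 := by omega
      subst h3
      rw [if_neg (lt_irrefl _), if_pos (by omega : 2*n-3 < 2*n-2),
        if_neg (by omega : ¬ 2*n-3+1 < 2*n-2),
        show 2*n-3+1 = 2*n-2 by omega]
      exact hadj

set_option linter.unusedSectionVars false in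
lemma cycB (n : ℕ) (hn : 3 ≤ n) (G : ℕ → SimpleGraph V)
    (w : ℕ → V) (hwinj : Set.InjOn w (Set.Icc 1 (2*n)))
    (ψ : ℕ → ℕ) (hψinj : Set.InjOn ψ (Set.Icc 1 (2*n-3)))
    (hψran : ∀ i, 1 ≤ i → i ≤ 2*n-3 → 1 ≤ ψ i ∧ ψ i ≤ 2*n-1)
    (hψadj : ∀ i, 1 ≤ i → i ≤ 2*n-3 → (G (ψ i)).Adj (w i) (w (i+1)))
    (la lb : ℕ) (hla : 1 ≤ la ∧ la ≤ 2*n-1) (hlb : 1 ≤ lb ∧ lb ≤ 2*n-1)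
    (hlab : la ≠ lb)
    (hlanot : ∀ i, 1 ≤ i → i ≤ 2*n-3 → ψ i ≠ la)
    (hlbnot : ∀ i, 1 ≤ i → i ≤ 2*n-3 → ψ i ≠ lb)
    (j : ℕ) (hj1 : 2 ≤ j) (hj2 : j ≤ n-2)
    (ha : (G la).Adj (w 1) (w (2*j)))
    (hb : (G lb).Adj (w (2*j-1)) (w (2*n-2))) :
    ∃ v : ℕ → V, ∃ φ : ℕ → ℕ, IsRainbowCycle G (2*n-1) (2*n-2) v φ := by
  have hne : ∀ a b, 1 ≤ a → a ≤ 2*n-3 → 1 ≤ b → b ≤ 2*n-3 → a ≠ b → ψ a ≠ ψ b :=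
    fun a b h1 h2 h3 h4 h5 h => h5 (hψinj ⟨h1, h2⟩ ⟨h3, h4⟩ h)
  refine ⟨fun i => if i ≤ 2*j-2 then w (i+1) else if i ≤ 2*n-3 then w (2*j+2*n-3-i) else w 1,
    fun i => if i ≤ 2*j-3 then ψ (i+1) else if i = 2*j-2 then lb
      else if i ≤ 2*n-4 then ψ (2*j+2*n-4-i) else la, ?_, ?_, ?_, ?_, ?_⟩
  · intro a ha' b hb' hab
    simp only [Set.mem_Iio] at ha' hb'
    simp only at hab
    split_ifs at hab <;>
      first
        | omega
        | (have := hwinj (Set.mem_Icc.mpr (by omega)) (Set.mem_Icc.mpr (by omega)) hab; omega)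
  · simp only [if_neg (by omega : ¬ 2*n-2 ≤ 2*j-2), if_neg (by omega : ¬ 2*n-2 ≤ 2*n-3),
      if_pos (by omega : 0 ≤ 2*j-2)]
  · intro a ha' b hb' hab
    simp only [Set.mem_Iio] at ha' hb'
    simp only at hab
    split_ifs at hab <;>
      first
        | omega
        | exact absurd hab (hne _ _ (by omega) (by omega) (by omega) (by omega) (by omega))
        | exact absurd hab.symm (hne _ _ (by omega) (by omega) (by omega) (by omega) (by omega))
        | exact absurd hab (hlanot _ (by omega) (by omega))
        | exact absurd hab.symm (hlanot _ (by omega) (by omega))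
        | exact absurd hab (hlbnot _ (by omega) (by omega))
        | exact absurd hab.symm (hlbnot _ (by omega) (by omega))
        | exact absurd hab hlab
        | exact absurd hab.symm hlab
        | (by_contra hcon; exact hne _ _ (by omega) (by omega) (by omega) (by omega) (by omega) hab)
  · intro i hi
    simp only
    split_ifs <;> first | exact hψran _ (by omega) (by omega) | exact hla | exact hlb
  · intro i hi
    simp only
    rcases lt_or_ge i (2*j-2) with h | h
    · rw [if_pos (by omega : i ≤ 2*j-3), if_pos (by omega : i ≤ 2*j-2),
        if_pos (by omega : i+1 ≤ 2*j-2)]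
      exact hψadj _ (by omega) (by omega)
    · rcases eq_or_lt_of_le h with h' | h'
      · rw [if_neg (by omega : ¬ i ≤ 2*j-3), if_pos (by omega : i = 2*j-2),
          if_pos (by omega : i ≤ 2*j-2), if_neg (by omega : ¬ i+1 ≤ 2*j-2),
          if_pos (by omega : i+1 ≤ 2*n-3), show i+1 = 2*j-1 from by omega,
          show 2*j+2*n-3-(2*j-1) = 2*n-2 from by omega]
        exact hb
      · rcases lt_or_ge i (2*n-3) with h2 | h2
        · rw [if_neg (by omega : ¬ i ≤ 2*j-3), if_neg (by omega : i ≠ 2*j-2),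
            if_pos (by omega : i ≤ 2*n-4), if_neg (by omega : ¬ i ≤ 2*j-2),
            if_pos (by omega : i ≤ 2*n-3), if_neg (by omega : ¬ i+1 ≤ 2*j-2),
            if_pos (by omega : i+1 ≤ 2*n-3)]
          have e : 2*j+2*n-3-i = (2*j+2*n-4-i) + 1 := by omega
          have e2 : 2*j+2*n-3-(i+1) = 2*j+2*n-4-i := by omega
          rw [e, e2]
          exact (hψadj _ (by omega) (by omega)).symm
        · have h3 : i = 2*n-3 := by omega
          subst h3
          rw [if_neg (by omega : ¬ 2*n-3 ≤ 2*j-3), if_neg (by omega : 2*n-3 ≠ 2*j-2),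
            if_neg (by omega : ¬ 2*n-3 ≤ 2*n-4), if_neg (by omega : ¬ 2*n-3 ≤ 2*j-2),
            if_pos (le_refl _), if_neg (by omega : ¬ 2*n-3+1 ≤ 2*j-2),
            if_neg (by omega : ¬ 2*n-3+1 ≤ 2*n-3),
            show 2*j+2*n-3-(2*n-3) = 2*j from by omega]
          exact ha.symm

lemma keylem (n : ℕ) (hn : 3 ≤ n) (G : ℕ → SimpleGraph V) (X Y : Finset V)
    (hdisj : Disjoint X Y)
    (hbip : ∀ i, 1 ≤ i → i ≤ 2 * n - 1 → ∀ a b : V, (G i).Adj a b →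
      (a ∈ X ∧ b ∈ Y) ∨ (a ∈ Y ∧ b ∈ X))
    (hdeg : ∀ i, 1 ≤ i → i ≤ 2 * n - 1 → ∀ a : V, (n + 1) / 2 ≤ ((G i).neighborSet a).ncard)
    (w : ℕ → V) (hwinj : Set.InjOn w (Set.Icc 1 (2 * n)))
    (hwcov : ∀ a : V, ∃ i, 1 ≤ i ∧ i ≤ 2 * n ∧ w i = a)
    (hwpar : ∀ i, 1 ≤ i → i ≤ 2 * n → (Odd i → w i ∈ X) ∧ (Even i → w i ∈ Y))
    (ψ : ℕ → ℕ) (hψinj : Set.InjOn ψ (Set.Icc 1 (2 * n - 3)))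
    (hψran : ∀ i, 1 ≤ i → i ≤ 2 * n - 3 → 1 ≤ ψ i ∧ ψ i ≤ 2 * n - 1)
    (hψadj : ∀ i, 1 ≤ i → i ≤ 2 * n - 3 → (G (ψ i)).Adj (w i) (w (i + 1)))
    (la lb : ℕ) (hlab : la ≠ lb)
    (hla : 1 ≤ la ∧ la ≤ 2 * n - 1) (hlb : 1 ≤ lb ∧ lb ≤ 2 * n - 1)
    (hlanot : ∀ i, 1 ≤ i → i ≤ 2 * n - 3 → ψ i ≠ la)
    (hlbnot : ∀ i, 1 ≤ i → i ≤ 2 * n - 3 → ψ i ≠ lb)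
    (hnocyc : ¬ ∃ v : ℕ → V, ∃ φ : ℕ → ℕ, IsRainbowCycle G (2 * n - 1) (2 * n - 2) v φ)
    (hna : ¬ (G la).Adj (w 1) (w (2 * n)))
    (hnb : ¬ (G lb).Adj (w (2 * n - 2)) (w (2 * n - 1))) : False := by
  classical
  have hXY : ∀ a, a ∈ X → a ∉ Y := fun a haX => Finset.disjoint_left.mp hdisj haX
  have hYX : ∀ a, a ∈ Y → a ∉ X := fun a haY => Finset.disjoint_right.mp hdisj haY
  set A : Finset ℕ := (Icc 1 (n-1)).filter (fun j => (G la).Adj (w 1) (w (2*j))) with hA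
  set B : Finset ℕ := (Icc 1 (n-1)).filter (fun j => (G lb).Adj (w (2*j-1)) (w (2*n-2))) with hB
  -- w 1 ∈ X, w (2n-2) ∈ Y
  have hw1X : w 1 ∈ X := (hwpar 1 le_rfl (by omega)).1 odd_one
  have hw2n2Y : w (2*n-2) ∈ Y := (hwpar (2*n-2) (by omega) (by omega)).2 (by
    refine ⟨n-1, by omega⟩)
  have hAcard : (n+1)/2 ≤ A.card := by
    have hN := hdeg la hla.1 hla.2 (w 1)
    have hsub : (G la).neighborSet (w 1) ⊆ ↑(A.image (fun j => w (2*j))) := by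
      intro y hy
      have hy' : (G la).Adj (w 1) y := hy
      have hyY : y ∈ Y := by
        rcases hbip la hla.1 hla.2 _ _ hy' with ⟨_, h⟩ | ⟨h, _⟩
        · exact h
        · exact absurd h (hXY _ hw1X)
      obtain ⟨i, hi1, hi2, hi3⟩ := hwcov y
      have hieven : Even i := by
        rcases Nat.even_or_odd i with h | h
        · exact h
        · exfalso
          have := (hwpar i hi1 hi2).1 h
          rw [hi3] at this
          exact hYX _ hyY this
      obtain ⟨j, hj⟩ := hieven
      have hjub : j ≤ n := by omega
      have hjne : j ≠ n := by
        intro h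
        rw [← hi3, show i = 2*n by omega] at hy'
        exact hna hy'
      have hmem : j ∈ A := by
        rw [hA, mem_filter, mem_Icc]
        refine ⟨⟨by omega, by omega⟩, ?_⟩
        rw [show 2*j = i by omega, hi3]
        exact hy'
      simp only [coe_image, Set.mem_image, mem_coe]
      exact ⟨j, hmem, by rw [show 2*j = i by omega, hi3]⟩
    calc (n+1)/2 ≤ ((G la).neighborSet (w 1)).ncard := hN
      _ ≤ (↑(A.image (fun j => w (2*j))) : Set V).ncard :=
          Set.ncard_le_ncard hsub (Finset.finite_toSet _)
      _ = (A.image (fun j => w (2*j))).card := Set.ncard_coe_finset _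
      _ ≤ A.card := Finset.card_image_le
  have hBcard : (n+1)/2 ≤ B.card := by
    have hN := hdeg lb hlb.1 hlb.2 (w (2*n-2))
    have hsub : (G lb).neighborSet (w (2*n-2)) ⊆ ↑(B.image (fun j => w (2*j-1))) := by
      intro x hx
      have hx' : (G lb).Adj (w (2*n-2)) x := hx
      have hxX : x ∈ X := by
        rcases hbip lb hlb.1 hlb.2 _ _ hx' with ⟨h, _⟩ | ⟨_, h⟩
        · exact absurd h (hYX _ hw2n2Y)
        · exact h
      obtain ⟨i, hi1, hi2, hi3⟩ := hwcov x
      have hiodd : Odd i := by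
        rcases Nat.even_or_odd i with h | h
        · exfalso
          have := (hwpar i hi1 hi2).2 h
          rw [hi3] at this
          exact hXY _ hxX this
        · exact h
      obtain ⟨j, hj⟩ := hiodd
      have hjub : j ≤ n - 1 := by omega
      have hjne : i ≠ 2*n-1 := by
        intro h
        rw [← hi3, h] at hx'
        exact hnb hx'
      have hmem : j+1 ∈ B := by
        rw [hB, mem_filter, mem_Icc]
        refine ⟨⟨by omega, by omega⟩, ?_⟩
        rw [show 2*(j+1)-1 = i by omega, hi3]
        exact hx'.symm
      simp only [coe_image, Set.mem_image, mem_coe]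
      exact ⟨j+1, hmem, by rw [show 2*(j+1)-1 = i by omega, hi3]⟩
    calc (n+1)/2 ≤ ((G lb).neighborSet (w (2*n-2))).ncard := hN
      _ ≤ (↑(B.image (fun j => w (2*j-1))) : Set V).ncard :=
          Set.ncard_le_ncard hsub (Finset.finite_toSet _)
      _ = (B.image (fun j => w (2*j-1))).card := Set.ncard_coe_finset _
      _ ≤ B.card := Finset.card_image_le
  have hABdisj : Disjoint A B := by
    rw [Finset.disjoint_left]
    intro j hjA hjB
    rw [hA, mem_filter, mem_Icc] at hjA
    rw [hB, mem_filter, mem_Icc] at hjB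
    obtain ⟨⟨hj1, hj2⟩, haj⟩ := hjA
    obtain ⟨_, hbj⟩ := hjB
    rcases eq_or_lt_of_le hj1 with h1 | h1
    · -- j = 1
      apply hnocyc
      rw [show 2*j-1 = 1 by omega] at hbj
      exact cycA n hn G w hwinj ψ hψinj hψran hψadj lb hlb hlbnot hbj.symm
    · rcases eq_or_lt_of_le hj2 with h2 | h2
      · -- j = n-1
        apply hnocyc
        rw [show 2*j = 2*n-2 by omega] at haj
        exact cycA n hn G w hwinj ψ hψinj hψran hψadj la hla hlanot haj.symm
      · apply hnocyc
        exact cycB n hn G w hwinj ψ hψinj hψran hψadj la lb hla hlb hlab hlanot hlbnot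
          j (by omega) (by omega) haj hbj
  have hunion : (A ∪ B).card ≤ n - 1 := by
    have : A ∪ B ⊆ Icc 1 (n-1) := by
      apply Finset.union_subset <;> exact Finset.filter_subset _ _
    calc (A ∪ B).card ≤ (Icc 1 (n-1)).card := Finset.card_le_card this
      _ = n - 1 := by rw [Nat.card_Icc]; omega
  rw [Finset.card_union_of_disjoint hABdisj] at hunion
  omega

theorem stmt5 (n : ℕ) (hn : 3 ≤ n) (G : ℕ → SimpleGraph V) (X Y : Finset V)
    (hdisj : Disjoint X Y) (hcov : ∀ w : V, w ∈ X ∨ w ∈ Y)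
    (hX : X.card = n) (hY : Y.card = n)
    (hbip : ∀ i, 1 ≤ i → i ≤ 2 * n - 1 → ∀ a b : V, (G i).Adj a b →
      (a ∈ X ∧ b ∈ Y) ∨ (a ∈ Y ∧ b ∈ X))
    (hdeg : ∀ i, 1 ≤ i → i ≤ 2 * n - 1 → ∀ a : V, (n + 1) / 2 ≤ ((G i).neighborSet a).ncard)
    (w : ℕ → V) (hwinj : Set.InjOn w (Set.Icc 1 (2 * n)))
    (hwcov : ∀ a : V, ∃ i, 1 ≤ i ∧ i ≤ 2 * n ∧ w i = a)
    (hwpar : ∀ i, 1 ≤ i → i ≤ 2 * n → (Odd i → w i ∈ X) ∧ (Even i → w i ∈ Y))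
    (ψ : ℕ → ℕ) (hψinj : Set.InjOn ψ (Set.Icc 1 (2 * n - 3)))
    (hψran : ∀ i, 1 ≤ i → i ≤ 2 * n - 3 → 1 ≤ ψ i ∧ ψ i ≤ 2 * n - 1)
    (hψadj : ∀ i, 1 ≤ i → i ≤ 2 * n - 3 → (G (ψ i)).Adj (w i) (w (i + 1)))
    (l1 l2 : ℕ) (hl12 : l1 ≠ l2)
    (hl1 : 1 ≤ l1 ∧ l1 ≤ 2 * n - 1) (hl2 : 1 ≤ l2 ∧ l2 ≤ 2 * n - 1)
    (hlnot : ∀ i, 1 ≤ i → i ≤ 2 * n - 3 → ψ i ≠ l1 ∧ ψ i ≠ l2)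
    (hnocyc : ¬ ∃ v : ℕ → V, ∃ φ : ℕ → ℕ, IsRainbowCycle G (2 * n - 1) (2 * n - 2) v φ) :
    (¬ (G l1).Adj (w 1) (w (2 * n)) → (G l2).Adj (w (2 * n - 2)) (w (2 * n - 1))) ∧
    (¬ (G l1).Adj (w (2 * n - 2)) (w (2 * n - 1)) → (G l2).Adj (w 1) (w (2 * n))) := by
  constructor
  · intro h1
    by_contra h2
    exact keylem n hn G X Y hdisj hbip hdeg w hwinj hwcov hwpar ψ hψinj hψran hψadj
      l1 l2 hl12 hl1 hl2 (fun i a b => (hlnot i a b).1) (fun i a b => (hlnot i a b).2)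
      hnocyc h1 h2
  · intro h1
    by_contra h2
    exact keylem n hn G X Y hdisj hbip hdeg w hwinj hwcov hwpar ψ hψinj hψran hψadj
      l2 l1 hl12.symm hl2 hl1 (fun i a b => (hlnot i a b).2) (fun i a b => (hlnot i a b).1)
      hnocyc h2 h1
end

section
/- Let n ≥ 3 and let G, C, D, x, y be as in the auxiliary digraph setup with δ(G_i) ≥ ⌈n/2⌉ for all i ∈ [2n-1]. Suppose G has no transversal isomorphic to a Hamiltonian path. Then xy ∉ E(G_{2n-1}). -/
open Finset

variable {V : Type*} [DecidableEq V]

theorem stmt8 (n : ℕ) (hn : 3 ≤ n) (G : ℕ → SimpleGraph V) (X Y : Finset V)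
    (hdisj : Disjoint X Y) (hcov : ∀ w : V, w ∈ X ∨ w ∈ Y)
    (hX : X.card = n) (hY : Y.card = n)
    (hbip : ∀ i, 1 ≤ i → i ≤ 2 * n - 1 → ∀ a b : V, (G i).Adj a b →
      (a ∈ X ∧ b ∈ Y) ∨ (a ∈ Y ∧ b ∈ X))
    (hdeg : ∀ i, 1 ≤ i → i ≤ 2 * n - 1 → ∀ a : V, (n + 1) / 2 ≤ ((G i).neighborSet a).ncard)
    (u : ℕ → V) (x y : V)
    (huinj : Set.InjOn u (Set.Icc 1 (2 * n - 2)))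
    (hxX : x ∈ X) (hyY : y ∈ Y)
    (huxy : ∀ i, 1 ≤ i → i ≤ 2 * n - 2 → u i ≠ x ∧ u i ≠ y)
    (hupar : ∀ i, 1 ≤ i → i ≤ 2 * n - 2 → (Odd i → u i ∈ X) ∧ (Even i → u i ∈ Y))
    (hucov : ∀ w : V, w = x ∨ w = y ∨ ∃ i, 1 ≤ i ∧ i ≤ 2 * n - 2 ∧ u i = w)
    (hC : ∀ i, 1 ≤ i → i ≤ 2 * n - 3 → (G i).Adj (u i) (u (i + 1)))
    (hC2 : (G (2 * n - 2)).Adj (u (2 * n - 2)) (u 1))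
    (hnoham : ¬ HasRainbowHamPath G (2 * n - 1) n) :
    ¬ (G (2 * n - 1)).Adj x y := by
  classical
  intro hedge
  have hxyne : x ≠ y := by
    intro h; exact Finset.disjoint_left.mp hdisj hxX (h ▸ hyY)
  set L := 2 * n - 2 with hLdef
  have hL4 : 4 ≤ L := by omega
  have hLpos : 0 < L := by omega
  have hL1e : 2 * n - 1 = L + 1 := by omega
  have hmodlt : ∀ j : ℕ, j % L < L := fun j => Nat.mod_lt _ hLpos
  set w : ℕ → V := fun j => u (j % L + 1) with hwdef
  have hwper : ∀ j, w (j + L) = w j := by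
    intro j; simp only [hwdef]; rw [Nat.add_mod_right]
  have hwadj : ∀ j : ℕ, (G (j % L + 1)).Adj (w j) (w (j + 1)) := by
    intro j
    have hmj := hmodlt j
    by_cases h : j % L + 1 = L
    · have h1 : (j + 1) % L = 0 := by
        rw [← Nat.mod_add_mod, h, Nat.mod_self]
      simp only [hwdef]
      rw [h1, h]
      exact hC2
    · have h1 : (j + 1) % L = j % L + 1 := by
        rw [← Nat.mod_add_mod]; exact Nat.mod_eq_of_lt (by omega)
      simp only [hwdef]
      rw [h1]
      exact hC (j % L + 1) (by omega) (by omega)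
  have harith : ∀ a b t : ℕ, t ≤ a → a < t + L → t ≤ b → b < t + L → a % L = b % L → a = b := by
    intro a b t h1 h2 h3 h4 h
    by_cases hab : a = b
    · exact hab
    rcases le_or_gt a b with hle | hlt
    · have hd := (Nat.modEq_iff_dvd' hle).mp h
      have := Nat.le_of_dvd (by omega) hd
      omega
    · have hd := (Nat.modEq_iff_dvd' (le_of_lt hlt)).mp h.symm
      have := Nat.le_of_dvd (by omega) hd
      omega
  have hwinjmod : ∀ j1 j2 : ℕ, w j1 = w j2 → j1 % L = j2 % L := by
    intro j1 j2 h
    have h1 := hmodlt j1; have h2 := hmodlt j2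
    have := huinj (Set.mem_Icc.mpr ⟨by omega, by omega⟩) (Set.mem_Icc.mpr ⟨by omega, by omega⟩) h
    omega
  have hkey : ∀ (t j1 j2 : ℕ), t ≤ j1 → j1 < t + L → t ≤ j2 → j2 < t + L → w j1 = w j2 → j1 = j2 :=
    fun t j1 j2 a b c d h => harith _ _ t a b c d (hwinjmod _ _ h)
  have hwcongr : ∀ j1 j2 : ℕ, j1 % L = j2 % L → w j1 = w j2 := by
    intro j1 j2 h; simp only [hwdef, h]
  have hwne : ∀ j : ℕ, w j ≠ x ∧ w j ≠ y := by
    intro j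
    exact huxy (j % L + 1) (by omega) (by have := hmodlt j; omega)
  have hwu : ∀ i, 1 ≤ i → i ≤ L → w (i - 1) = u i := by
    intro i h1 h2
    simp only [hwdef]
    rw [Nat.mod_eq_of_lt (by omega)]
    congr 1
    omega
  have hwcov : ∀ z : V, z ≠ x → z ≠ y → ∃ j, j < L ∧ w j = z := by
    intro z hzx hzy
    rcases hucov z with rfl | rfl | ⟨i, hi1, hi2, hiz⟩
    · exact absurd rfl hzx
    · exact absurd rfl hzy
    · exact ⟨i - 1, by omega, by rw [hwu i hi1 (by omega)]; exact hiz⟩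
  have hsub1 : ∀ a b : ℕ, 1 ≤ a → 1 ≤ b → a % L = b % L → (a - 1) % L = (b - 1) % L := by
    intro a b ha hb h
    rcases le_or_gt a b with hab | hab
    · have hd : L ∣ b - a := (Nat.modEq_iff_dvd' hab).mp h
      have hd2 : L ∣ (b - 1) - (a - 1) := by
        have he : b - 1 - (a - 1) = b - a := by omega
        rw [he]; exact hd
      exact (Nat.modEq_iff_dvd' (by omega)).mpr hd2
    · have hd : L ∣ a - b := (Nat.modEq_iff_dvd' (le_of_lt hab)).mp h.symm
      have hd2 : L ∣ (a - 1) - (b - 1) := by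
        have he : a - 1 - (b - 1) = a - b := by omega
        rw [he]; exact hd
      exact ((Nat.modEq_iff_dvd' (by omega)).mpr hd2).symm
  have hshift : ∀ c a : ℕ, 1 ≤ c → c ≤ L → (c + (a + L - c) % L) % L = a % L := by
    intro c a h1 h2
    rw [Nat.add_mod_mod, show c + (a + L - c) = a + L from by omega, Nat.add_mod_right]
  have L1 : ∀ (k : ℕ) (a b : V), 1 ≤ k → k ≤ L →
      ((a = x ∧ b = y) ∨ (a = y ∧ b = x)) →
      (G k).Adj a b → (G (2 * n - 1)).Adj b (u k) → False := by
    intro k a b hk1 hk2 hab hadj1 hadj2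
    have habne : a ≠ b := by
      rcases hab with ⟨rfl, rfl⟩ | ⟨rfl, rfl⟩
      · exact hxyne
      · exact hxyne.symm
    have hwa : ∀ j, w j ≠ a := by
      rcases hab with ⟨rfl, _⟩ | ⟨rfl, _⟩
      · exact fun j => (hwne j).1
      · exact fun j => (hwne j).2
    have hwb : ∀ j, w j ≠ b := by
      rcases hab with ⟨_, rfl⟩ | ⟨_, rfl⟩
      · exact fun j => (hwne j).2
      · exact fun j => (hwne j).1
    have hcovab : ∀ z : V, z = a ∨ z = b ∨ ∃ j, j < L ∧ w j = z := by
      intro z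
      by_cases hz1 : z = a
      · exact Or.inl hz1
      by_cases hz2 : z = b
      · exact Or.inr (Or.inl hz2)
      refine Or.inr (Or.inr (hwcov z ?_ ?_))
      · rcases hab with ⟨ha, hb⟩ | ⟨ha, hb⟩
        · rw [← ha]; exact hz1
        · rw [← hb]; exact hz2
      · rcases hab with ⟨ha, hb⟩ | ⟨ha, hb⟩
        · rw [← hb]; exact hz2
        · rw [← ha]; exact hz1
    apply hnoham
    refine ⟨fun j => match j with
        | 0 => a
        | 1 => b
        | (t + 2) => w (k + L - 1 - t),
      fun j => match j with
        | 0 => k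
        | 1 => 2 * n - 1
        | (t + 2) => (k + L - 2 - t) % L + 1,
      ⟨?_, ?_, ?_, ?_⟩, ?_⟩
    · -- InjOn v
      intro i hi j hj hij
      simp only [Set.mem_Iic, hL1e] at hi hj
      match i, j with
      | 0, 0 => rfl
      | 0, 1 => exact absurd hij habne
      | 0, (j+2) => exact absurd hij.symm (hwa _)
      | 1, 0 => exact absurd hij.symm habne
      | 1, 1 => rfl
      | 1, (j+2) => exact absurd hij.symm (hwb _)
      | (i+2), 0 => exact absurd hij (hwa _)
      | (i+2), 1 => exact absurd hij (hwb _)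
      | (i+2), (j+2) =>
        have h := hkey k (k + L - 1 - i) (k + L - 1 - j) (by omega) (by omega) (by omega) (by omega) hij
        show i + 2 = j + 2
        omega
    · -- InjOn φ
      intro i hi j hj hij
      simp only [Set.mem_Iio, hL1e] at hi hj
      have hcL1 : (k + L - 1) % L = k - 1 := by
        rw [show k + L - 1 = (k - 1) + L from by omega, Nat.add_mod_right, Nat.mod_eq_of_lt (by omega)]
      match i, j with
      | 0, 0 => rfl
      | 0, 1 =>
        have h' : k = 2 * n - 1 := hij
        omega
      | 0, (j+2) =>
        exfalso
        have h' : k = (k + L - 2 - j) % L + 1 := hij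
        have h1 : (k + L - 2 - j) % L = (k + L - 1) % L := by omega
        have := harith (k + L - 2 - j) (k + L - 1) k (by omega) (by omega) (by omega) (by omega) h1
        omega
      | 1, 0 =>
        have h' : 2 * n - 1 = k := hij
        omega
      | 1, 1 => rfl
      | 1, (j+2) =>
        exfalso
        have h' : 2 * n - 1 = (k + L - 2 - j) % L + 1 := hij
        have := hmodlt (k + L - 2 - j)
        omega
      | (i+2), 0 =>
        exfalso
        have h' : (k + L - 2 - i) % L + 1 = k := hij
        have h1 : (k + L - 2 - i) % L = (k + L - 1) % L := by omega
        have := harith (k + L - 2 - i) (k + L - 1) k (by omega) (by omega) (by omega) (by omega) h1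
        omega
      | (i+2), 1 =>
        exfalso
        have h' : (k + L - 2 - i) % L + 1 = 2 * n - 1 := hij
        have := hmodlt (k + L - 2 - i)
        omega
      | (i+2), (j+2) =>
        have h' : (k + L - 2 - i) % L + 1 = (k + L - 2 - j) % L + 1 := hij
        have h1 : (k + L - 2 - i) % L = (k + L - 2 - j) % L := by omega
        have := harith (k + L - 2 - i) (k + L - 2 - j) k (by omega) (by omega) (by omega) (by omega) h1
        show i + 2 = j + 2
        omega
    · -- range
      intro i hi
      match i with
      | 0 => exact ⟨hk1, by show k ≤ 2 * n - 1; omega⟩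
      | 1 => exact ⟨by show 1 ≤ 2 * n - 1; omega, le_rfl⟩
      | (t+2) =>
        have := hmodlt (k + L - 2 - t)
        exact ⟨by show 1 ≤ (k + L - 2 - t) % L + 1; omega,
               by show (k + L - 2 - t) % L + 1 ≤ 2 * n - 1; omega⟩
    · -- adjacency
      intro i hi
      rw [hL1e] at hi
      match i with
      | 0 => exact hadj1
      | 1 =>
        show (G (2 * n - 1)).Adj b (w (k + L - 1 - 0))
        rw [show k + L - 1 - 0 = (k - 1) + L from by omega, hwper, hwu k hk1 hk2]
        exact hadj2
      | (t+2) =>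
        show (G ((k + L - 2 - t) % L + 1)).Adj (w (k + L - 1 - t)) (w (k + L - 1 - (t+1)))
        have h := hwadj (k + L - 2 - t)
        rw [show k + L - 2 - t + 1 = k + L - 1 - t from by omega] at h
        rw [show k + L - 1 - (t + 1) = k + L - 2 - t from by omega]
        exact h.symm
    · -- coverage
      intro z
      rcases hcovab z with rfl | rfl | ⟨j0, hj0, hj0e⟩
      · exact ⟨0, by omega, rfl⟩
      · exact ⟨1, by omega, rfl⟩
      · rcases le_or_gt k j0 with hcase | hcase
        · refine ⟨k + L - 1 - j0 + 2, by omega, ?_⟩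
          show w (k + L - 1 - (k + L - 1 - j0)) = z
          rw [show k + L - 1 - (k + L - 1 - j0) = j0 from by omega]
          exact hj0e
        · refine ⟨k - 1 - j0 + 2, by omega, ?_⟩
          show w (k + L - 1 - (k - 1 - j0)) = z
          rw [show k + L - 1 - (k - 1 - j0) = j0 + L from by omega, hwper]
          exact hj0e
  have L2 : ∀ (c d α β γ : ℕ), 1 ≤ c → c ≤ L → 1 ≤ d → d ≤ L → c ≠ d →
      (α = c ∨ α = d ∨ α = 2 * n - 1) → (β = c ∨ β = d ∨ β = 2 * n - 1) →
      (γ = c ∨ γ = d ∨ γ = 2 * n - 1) → α ≠ β → α ≠ γ → β ≠ γ →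
      (G α).Adj x (u d) → (G β).Adj x y → (G γ).Adj y (u c) → False := by
    intro c d α β γ hc1 hc2 hd1 hd2 hcd hα hβ hγ hαβ hαγ hβγ hadjα hadjβ hadjγ
    set l := (d + L - c) % L with hldef
    have hld : (c + l) % L = d % L := hshift c d hc1 hc2
    have hl2 : l < L := hmodlt _
    have hl1 : 1 ≤ l := by
      rcases Nat.eq_zero_or_pos l with h0 | h
      · exfalso
        rw [h0, Nat.add_zero] at hld
        exact hcd (harith c d 1 (by omega) (by omega) (by omega) (by omega) hld)
      · exact h
    have hmd : (c + l - 1) % L = (d - 1) % L := hsub1 (c + l) d (by omega) hd1 hld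
    have hwdm : w (c + l - 1) = u d := (hwcongr _ _ hmd).trans (hwu d hd1 hd2)
    have hwcm : w (c + L - 1) = u c := by
      have h1 : (c + L - 1) % L = (c - 1) % L := hsub1 (c + L) c (by omega) hc1 (by rw [Nat.add_mod_right])
      exact (hwcongr _ _ h1).trans (hwu c hc1 hc2)
    have hcL1 : (c + L - 1) % L = c - 1 := by
      rw [show c + L - 1 = (c - 1) + L from by omega, Nat.add_mod_right, Nat.mod_eq_of_lt (by omega)]
    have hdL1 : (c + l - 1) % L = d - 1 := by
      rw [hmd, Nat.mod_eq_of_lt (by omega)]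
    apply hnoham
    set vf : ℕ → V := fun j => if j < l then w (c + j) else if j = l then x
        else if j = l + 1 then y else w (c + L + 1 + l - j) with hvf
    set pf : ℕ → ℕ := fun j => if j + 1 < l then (c + j) % L + 1 else if j + 1 = l then α
        else if j = l then β else if j = l + 1 then γ else (c + L + l - j) % L + 1 with hpf
    have hv1 : ∀ j, j < l → vf j = w (c + j) := by
      intro j h; simp only [hvf]; rw [if_pos h]
    have hv2 : vf l = x := by
      simp only [hvf]; rw [if_neg (lt_irrefl l)]; simp
    have hv3 : vf (l + 1) = y := by
      simp only [hvf]; rw [if_neg (by omega), if_neg (by omega)]; simp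
    have hv4 : ∀ j, l + 2 ≤ j → vf j = w (c + L + 1 + l - j) := by
      intro j h; simp only [hvf]; rw [if_neg (by omega), if_neg (by omega), if_neg (by omega)]
    have hp1 : ∀ j, j + 1 < l → pf j = (c + j) % L + 1 := by
      intro j h; simp only [hpf]; rw [if_pos h]
    have hp2 : ∀ j, j + 1 = l → pf j = α := by
      intro j h; simp only [hpf]; rw [if_neg (by omega), if_pos h]
    have hp3 : pf l = β := by
      simp only [hpf]; rw [if_neg (by omega), if_neg (by omega)]; simp
    have hp4 : pf (l + 1) = γ := by
      simp only [hpf]; rw [if_neg (by omega), if_neg (by omega), if_neg (by omega)]; simp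
    have hp5 : ∀ j, l + 2 ≤ j → pf j = (c + L + l - j) % L + 1 := by
      intro j h; simp only [hpf]
      rw [if_neg (by omega), if_neg (by omega), if_neg (by omega), if_neg (by omega)]
    -- cycle colors avoid α β γ
    have hnot1 : ∀ i, i + 1 < l → (c + i) % L + 1 ≠ c ∧ (c + i) % L + 1 ≠ d ∧ (c + i) % L + 1 ≠ 2 * n - 1 := by
      intro i h
      have hm := hmodlt (c + i)
      refine ⟨?_, ?_, by omega⟩
      · intro he
        have h1 : (c + i) % L = (c + L - 1) % L := by omega
        have := harith (c + i) (c + L - 1) c (by omega) (by omega) (by omega) (by omega) h1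
        omega
      · intro he
        have h1 : (c + i) % L = (c + l - 1) % L := by omega
        have := harith (c + i) (c + l - 1) c (by omega) (by omega) (by omega) (by omega) h1
        omega
    have hnot5 : ∀ i, l + 2 ≤ i → i ≤ L → (c + L + l - i) % L + 1 ≠ c ∧ (c + L + l - i) % L + 1 ≠ d ∧ (c + L + l - i) % L + 1 ≠ 2 * n - 1 := by
      intro i h hiL
      have hm := hmodlt (c + L + l - i)
      refine ⟨?_, ?_, by omega⟩
      · intro he
        have h1 : (c + L + l - i) % L = (c + L - 1) % L := by omega
        have := harith (c + L + l - i) (c + L - 1) c (by omega) (by omega) (by omega) (by omega) h1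
        omega
      · intro he
        have h1 : (c + L + l - i) % L = (c + l - 1) % L := by omega
        have := harith (c + L + l - i) (c + l - 1) c (by omega) (by omega) (by omega) (by omega) h1
        omega
    have hne1 : ∀ e, (e = c ∨ e = d ∨ e = 2 * n - 1) → ∀ i, i + 1 < l → (c + i) % L + 1 ≠ e := by
      intro e he i h
      have h3 := hnot1 i h
      rcases he with rfl | rfl | rfl
      · exact h3.1
      · exact h3.2.1
      · exact h3.2.2
    have hne5 : ∀ e, (e = c ∨ e = d ∨ e = 2 * n - 1) → ∀ i, l + 2 ≤ i → i ≤ L → (c + L + l - i) % L + 1 ≠ e := by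
      intro e he i h h'
      have h3 := hnot5 i h h'
      rcases he with rfl | rfl | rfl
      · exact h3.1
      · exact h3.2.1
      · exact h3.2.2
    have hne1α : ∀ i, i + 1 < l → (c + i) % L + 1 ≠ α := hne1 α hα
    have hne1β : ∀ i, i + 1 < l → (c + i) % L + 1 ≠ β := hne1 β hβ
    have hne1γ : ∀ i, i + 1 < l → (c + i) % L + 1 ≠ γ := hne1 γ hγ
    have hne5α : ∀ i, l + 2 ≤ i → i ≤ L → (c + L + l - i) % L + 1 ≠ α := hne5 α hα
    have hne5β : ∀ i, l + 2 ≤ i → i ≤ L → (c + L + l - i) % L + 1 ≠ β := hne5 β hβ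
    have hne5γ : ∀ i, l + 2 ≤ i → i ≤ L → (c + L + l - i) % L + 1 ≠ γ := hne5 γ hγ
    refine ⟨vf, pf, ⟨?_, ?_, ?_, ?_⟩, ?_⟩
    · -- InjOn vf
      intro i hi j hj hij
      simp only [Set.mem_Iic, hL1e] at hi hj
      have hri : i < l ∨ i = l ∨ i = l + 1 ∨ l + 2 ≤ i := by omega
      have hrj : j < l ∨ j = l ∨ j = l + 1 ∨ l + 2 ≤ j := by omega
      rcases hri with hri | hri | hri | hri <;> rcases hrj with hrj | hrj | hrj | hrj
      · rw [hv1 i hri, hv1 j hrj] at hij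
        have := harith (c + i) (c + j) c (by omega) (by omega) (by omega) (by omega)
          (hwinjmod _ _ hij)
        omega
      · rw [hv1 i hri, hrj, hv2] at hij; exact absurd hij (hwne _).1
      · rw [hv1 i hri, hrj, hv3] at hij; exact absurd hij (hwne _).2
      · rw [hv1 i hri, hv4 j hrj] at hij
        have := harith (c + i) (c + L + 1 + l - j) c (by omega) (by omega) (by omega) (by omega) (hwinjmod _ _ hij)
        omega
      · rw [hri, hv2, hv1 j hrj] at hij; exact absurd hij.symm (hwne _).1
      · omega
      · rw [hri, hrj, hv2, hv3] at hij; exact absurd hij hxyne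
      · rw [hri, hv2, hv4 j hrj] at hij; exact absurd hij.symm (hwne _).1
      · rw [hri, hv3, hv1 j hrj] at hij; exact absurd hij.symm (hwne _).2
      · rw [hri, hrj, hv3, hv2] at hij; exact absurd hij.symm hxyne
      · omega
      · rw [hri, hv3, hv4 j hrj] at hij; exact absurd hij.symm (hwne _).2
      · rw [hv4 i hri, hv1 j hrj] at hij
        have := harith (c + L + 1 + l - i) (c + j) c (by omega) (by omega) (by omega) (by omega) (hwinjmod _ _ hij)
        omega
      · rw [hrj, hv2, hv4 i hri] at hij; exact absurd hij (hwne _).1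
      · rw [hrj, hv3, hv4 i hri] at hij; exact absurd hij (hwne _).2
      · rw [hv4 i hri, hv4 j hrj] at hij
        have := harith (c + L + 1 + l - i) (c + L + 1 + l - j) c (by omega) (by omega) (by omega) (by omega) (hwinjmod _ _ hij)
        omega
    · -- InjOn pf
      intro i hi j hj hij
      simp only [Set.mem_Iio, hL1e] at hi hj
      have hri : i + 1 < l ∨ i + 1 = l ∨ i = l ∨ i = l + 1 ∨ (l + 2 ≤ i ∧ i ≤ L) := by omega
      have hrj : j + 1 < l ∨ j + 1 = l ∨ j = l ∨ j = l + 1 ∨ (l + 2 ≤ j ∧ j ≤ L) := by omega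
      rcases hri with hri | hri | hri | hri | ⟨hri, hri'⟩ <;>
        rcases hrj with hrj | hrj | hrj | hrj | ⟨hrj, hrj'⟩
      · rw [hp1 i hri, hp1 j hrj] at hij
        have h1 : (c + i) % L = (c + j) % L := by omega
        have := harith (c + i) (c + j) c (by omega) (by omega) (by omega) (by omega) h1
        omega
      · rw [hp1 i hri, hp2 j hrj] at hij; exact absurd hij (hne1α i hri)
      · rw [hp1 i hri, hrj, hp3] at hij; exact absurd hij (hne1β i hri)
      · rw [hp1 i hri, hrj, hp4] at hij; exact absurd hij (hne1γ i hri)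
      · rw [hp1 i hri, hp5 j hrj] at hij
        have h1 : (c + i) % L = (c + L + l - j) % L := by omega
        have := harith (c + i) (c + L + l - j) c (by omega) (by omega) (by omega) (by omega) h1
        omega
      · rw [hp2 i hri, hp1 j hrj] at hij; exact absurd hij.symm (hne1α j hrj)
      · omega
      · rw [hp2 i hri, hrj, hp3] at hij; exact absurd hij hαβ
      · rw [hp2 i hri, hrj, hp4] at hij; exact absurd hij hαγ
      · rw [hp2 i hri, hp5 j hrj] at hij; exact absurd hij.symm (hne5α j hrj hrj')
      · rw [hri, hp3, hp1 j hrj] at hij; exact absurd hij.symm (hne1β j hrj)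
      · rw [hri, hp3, hp2 j hrj] at hij; exact absurd hij.symm hαβ
      · omega
      · rw [hri, hrj, hp3, hp4] at hij; exact absurd hij hβγ
      · rw [hri, hp3, hp5 j hrj] at hij; exact absurd hij.symm (hne5β j hrj hrj')
      · rw [hri, hp4, hp1 j hrj] at hij; exact absurd hij.symm (hne1γ j hrj)
      · rw [hri, hp4, hp2 j hrj] at hij; exact absurd hij.symm hαγ
      · rw [hri, hrj, hp4, hp3] at hij; exact absurd hij.symm hβγ
      · omega
      · rw [hri, hp4, hp5 j hrj] at hij; exact absurd hij.symm (hne5γ j hrj hrj')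
      · rw [hp5 i hri, hp1 j hrj] at hij
        have h1 : (c + L + l - i) % L = (c + j) % L := by omega
        have := harith (c + L + l - i) (c + j) c (by omega) (by omega) (by omega) (by omega) h1
        omega
      · rw [hp5 i hri, hp2 j hrj] at hij; exact absurd hij (hne5α i hri hri')
      · rw [hrj, hp5 i hri, hp3] at hij; exact absurd hij (hne5β i hri hri')
      · rw [hrj, hp5 i hri, hp4] at hij; exact absurd hij (hne5γ i hri hri')
      · rw [hp5 i hri, hp5 j hrj] at hij
        have h1 : (c + L + l - i) % L = (c + L + l - j) % L := by omega
        have := harith (c + L + l - i) (c + L + l - j) c (by omega) (by omega) (by omega) (by omega) h1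
        omega
    · -- range of pf
      intro i hi
      rw [hL1e] at hi
      have hri : i + 1 < l ∨ i + 1 = l ∨ i = l ∨ i = l + 1 ∨ (l + 2 ≤ i ∧ i ≤ L) := by omega
      rcases hri with hri | hri | hri | hri | ⟨hri, hri'⟩
      · rw [hp1 i hri]
        have := hmodlt (c + i)
        omega
      · rw [hp2 i hri]
        rcases hα with rfl | rfl | rfl <;> omega
      · rw [hri, hp3]
        rcases hβ with rfl | rfl | rfl <;> omega
      · rw [hri, hp4]
        rcases hγ with rfl | rfl | rfl <;> omega
      · rw [hp5 i hri]
        have := hmodlt (c + L + l - i)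
        omega
    · -- adjacency
      intro i hi
      rw [hL1e] at hi
      have hri : i + 1 < l ∨ i + 1 = l ∨ i = l ∨ i = l + 1 ∨ (l + 2 ≤ i ∧ i ≤ L) := by omega
      rcases hri with hri | hri | hri | hri | ⟨hri, hri'⟩
      · rw [hp1 i hri, hv1 i (by omega), hv1 (i + 1) hri,
          show c + (i + 1) = (c + i) + 1 from by omega]
        exact hwadj (c + i)
      · rw [hp2 i hri, hv1 i (by omega), show i + 1 = l from hri, hv2,
          show c + i = c + l - 1 from by omega, hwdm]
        exact hadjα.symm
      · rw [hri, hp3, hv2, hv3]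
        exact hadjβ
      · rw [hri, hp4, hv3, show l + 1 + 1 = l + 2 from rfl, hv4 (l + 2) le_rfl,
          show c + L + 1 + l - (l + 2) = c + L - 1 from by omega, hwcm]
        exact hadjγ
      · rw [hp5 i hri, hv4 i hri, hv4 (i + 1) (by omega),
          show c + L + 1 + l - (i + 1) = c + L + l - i from by omega]
        have h := hwadj (c + L + l - i)
        rw [show c + L + l - i + 1 = c + L + 1 + l - i from by omega] at h
        exact h.symm
    · -- coverage
      intro z
      rcases hucov z with rfl | rfl | ⟨i0, h1, h2, hz⟩
      · exact ⟨l, by omega, hv2⟩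
      · exact ⟨l + 1, by omega, hv3⟩
      · have ht : (c + (i0 - 1 + L - c) % L) % L = (i0 - 1) % L := hshift c (i0 - 1) hc1 hc2
        set t := (i0 - 1 + L - c) % L with htdef
        have htL : t < L := hmodlt _
        rcases lt_or_ge t l with hcase | hcase
        · refine ⟨t, by omega, ?_⟩
          rw [hv1 t hcase]
          have he : w (c + t) = u i0 := (hwcongr _ _ ht).trans (hwu i0 h1 h2)
          rw [he]; exact hz
        · refine ⟨L + 1 + l - t, by omega, ?_⟩
          rw [hv4 _ (by omega), show c + L + 1 + l - (L + 1 + l - t) = c + t from by omega]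
          have he : w (c + t) = u i0 := (hwcongr _ _ ht).trans (hwu i0 h1 h2)
          rw [he]; exact hz
  -- ===== counting =====
  set m := (n + 1) / 2 with hmdef
  have hm2 : 2 ≤ m := by omega
  have hnb : ∀ i, 1 ≤ i → i ≤ 2 * n - 1 → ∀ a : V,
      m ≤ ((X ∪ Y).filter (fun z => (G i).Adj a z)).card := by
    intro i h1 h2 a
    have h := hdeg i h1 h2 a
    have e : (G i).neighborSet a = (((X ∪ Y).filter (fun z => (G i).Adj a z) : Finset V) : Set V) := by
      ext z
      simp only [SimpleGraph.mem_neighborSet, Finset.coe_filter, Set.mem_setOf_eq,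
        Finset.mem_union]
      constructor
      · intro hadj; exact ⟨hcov z, hadj⟩
      · intro hh; exact hh.2
    rw [e, Set.ncard_coe_finset] at h
    exact h
  set O : Finset ℕ := (Finset.range (n - 1)).image (fun i => 2 * i + 1) with hOdef
  set Ev : Finset ℕ := (Finset.range (n - 1)).image (fun i => 2 * i + 2) with hEdef
  have hOmem : ∀ c, c ∈ O ↔ (c % 2 = 1 ∧ c ≤ 2 * n - 3) := by
    intro c
    simp only [hOdef, Finset.mem_image, Finset.mem_range]
    constructor
    · rintro ⟨i, hi, rfl⟩; omega
    · intro ⟨h1, h2⟩; exact ⟨c / 2, by omega, by omega⟩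
  have hEmem : ∀ d, d ∈ Ev ↔ (d % 2 = 0 ∧ 2 ≤ d ∧ d ≤ 2 * n - 2) := by
    intro d
    simp only [hEdef, Finset.mem_image, Finset.mem_range]
    constructor
    · rintro ⟨i, hi, rfl⟩; omega
    · intro ⟨h1, h2, h3⟩; exact ⟨d / 2 - 1, by omega, by omega⟩
  have hOcard : O.card = n - 1 := by
    rw [hOdef, Finset.card_image_of_injective _ (fun a b h => by omega), Finset.card_range]
  have hEcard : Ev.card = n - 1 := by
    rw [hEdef, Finset.card_image_of_injective _ (fun a b h => by omega), Finset.card_range]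
  -- neighbors of x are y or u d with d ∈ Ev
  have hxNbr : ∀ i, 1 ≤ i → i ≤ 2 * n - 1 → ∀ z, z ∈ (X ∪ Y).filter (fun z => (G i).Adj x z) →
      z = y ∨ ∃ d ∈ Ev, u d = z := by
    intro i h1 h2 z hz
    obtain ⟨hzXY, hadj⟩ := Finset.mem_filter.mp hz
    have hzY : z ∈ Y := by
      rcases hbip i h1 h2 x z hadj with ⟨_, h⟩ | ⟨hxY, _⟩
      · exact h
      · exact absurd hxY (Finset.disjoint_left.mp hdisj hxX)
    by_cases hzy : z = y
    · exact Or.inl hzy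
    right
    rcases hucov z with rfl | rfl | ⟨j, hj1, hj2, rfl⟩
    · exact absurd hzY (Finset.disjoint_left.mp hdisj hxX)
    · exact absurd rfl hzy
    · have hjeven : j % 2 = 0 := by
        by_contra hodd
        have := (hupar j hj1 hj2).1 (Nat.odd_iff.mpr (by omega))
        exact Finset.disjoint_left.mp hdisj this hzY
      exact ⟨j, (hEmem j).mpr ⟨hjeven, by omega, by omega⟩, rfl⟩
  have hyNbr : ∀ i, 1 ≤ i → i ≤ 2 * n - 1 → ∀ z, z ∈ (X ∪ Y).filter (fun z => (G i).Adj y z) →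
      z = x ∨ ∃ c ∈ O, u c = z := by
    intro i h1 h2 z hz
    obtain ⟨hzXY, hadj⟩ := Finset.mem_filter.mp hz
    have hzX : z ∈ X := by
      rcases hbip i h1 h2 y z hadj with ⟨hyX, _⟩ | ⟨_, h⟩
      · exact absurd hyY (Finset.disjoint_left.mp hdisj hyX)
      · exact h
    by_cases hzx : z = x
    · exact Or.inl hzx
    right
    rcases hucov z with rfl | rfl | ⟨j, hj1, hj2, rfl⟩
    · exact absurd rfl hzx
    · exact absurd hyY (Finset.disjoint_left.mp hdisj hzX)
    · have hjodd : j % 2 = 1 := by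
        by_contra heven
        have := (hupar j hj1 hj2).2 (Nat.even_iff.mpr (by omega))
        exact Finset.disjoint_left.mp hdisj hzX this
      exact ⟨j, (hOmem j).mpr ⟨hjodd, by omega⟩, rfl⟩
  -- row bounds
  have hrowx : ∀ i, 1 ≤ i → i ≤ 2 * n - 1 → ¬ (G i).Adj x y →
      m ≤ (Ev.filter (fun d => (G i).Adj x (u d))).card := by
    intro i h1 h2 hnxy
    have hsub : (X ∪ Y).filter (fun z => (G i).Adj x z) ⊆
        (Ev.filter (fun d => (G i).Adj x (u d))).image u := by
      intro z hz
      rcases hxNbr i h1 h2 z hz with rfl | ⟨d, hd, hud⟩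
      · exact absurd (Finset.mem_filter.mp hz).2 hnxy
      · refine Finset.mem_image.mpr ⟨d, Finset.mem_filter.mpr ⟨hd, ?_⟩, hud⟩
        rw [hud]; exact (Finset.mem_filter.mp hz).2
    calc m ≤ ((X ∪ Y).filter (fun z => (G i).Adj x z)).card := hnb i h1 h2 x
      _ ≤ ((Ev.filter (fun d => (G i).Adj x (u d))).image u).card := Finset.card_le_card hsub
      _ ≤ (Ev.filter (fun d => (G i).Adj x (u d))).card := Finset.card_image_le
  have hrowx' : ∀ i, 1 ≤ i → i ≤ 2 * n - 1 →
      m ≤ (Ev.filter (fun d => (G i).Adj x (u d))).card + 1 := by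
    intro i h1 h2
    have hsub : (X ∪ Y).filter (fun z => (G i).Adj x z) ⊆
        insert y ((Ev.filter (fun d => (G i).Adj x (u d))).image u) := by
      intro z hz
      rcases hxNbr i h1 h2 z hz with rfl | ⟨d, hd, hud⟩
      · exact Finset.mem_insert_self _ _
      · refine Finset.mem_insert_of_mem (Finset.mem_image.mpr ⟨d, Finset.mem_filter.mpr ⟨hd, ?_⟩, hud⟩)
        rw [hud]; exact (Finset.mem_filter.mp hz).2
    calc m ≤ ((X ∪ Y).filter (fun z => (G i).Adj x z)).card := hnb i h1 h2 x
      _ ≤ (insert y ((Ev.filter (fun d => (G i).Adj x (u d))).image u)).card := Finset.card_le_card hsub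
      _ ≤ ((Ev.filter (fun d => (G i).Adj x (u d))).image u).card + 1 := Finset.card_insert_le _ _
      _ ≤ (Ev.filter (fun d => (G i).Adj x (u d))).card + 1 := by
          have := Finset.card_image_le (s := Ev.filter (fun d => (G i).Adj x (u d))) (f := u)
          omega
  have hrowy : ∀ i, 1 ≤ i → i ≤ 2 * n - 1 → ¬ (G i).Adj y x →
      m ≤ (O.filter (fun c => (G i).Adj y (u c))).card := by
    intro i h1 h2 hnxy
    have hsub : (X ∪ Y).filter (fun z => (G i).Adj y z) ⊆
        (O.filter (fun c => (G i).Adj y (u c))).image u := by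
      intro z hz
      rcases hyNbr i h1 h2 z hz with rfl | ⟨c, hc, huc⟩
      · exact absurd (Finset.mem_filter.mp hz).2 hnxy
      · refine Finset.mem_image.mpr ⟨c, Finset.mem_filter.mpr ⟨hc, ?_⟩, huc⟩
        rw [huc]; exact (Finset.mem_filter.mp hz).2
    calc m ≤ ((X ∪ Y).filter (fun z => (G i).Adj y z)).card := hnb i h1 h2 y
      _ ≤ ((O.filter (fun c => (G i).Adj y (u c))).image u).card := Finset.card_le_card hsub
      _ ≤ (O.filter (fun c => (G i).Adj y (u c))).card := Finset.card_image_le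
  have hrowy' : ∀ i, 1 ≤ i → i ≤ 2 * n - 1 →
      m ≤ (O.filter (fun c => (G i).Adj y (u c))).card + 1 := by
    intro i h1 h2
    have hsub : (X ∪ Y).filter (fun z => (G i).Adj y z) ⊆
        insert x ((O.filter (fun c => (G i).Adj y (u c))).image u) := by
      intro z hz
      rcases hyNbr i h1 h2 z hz with rfl | ⟨c, hc, huc⟩
      · exact Finset.mem_insert_self _ _
      · refine Finset.mem_insert_of_mem (Finset.mem_image.mpr ⟨c, Finset.mem_filter.mpr ⟨hc, ?_⟩, huc⟩)
        rw [huc]; exact (Finset.mem_filter.mp hz).2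
    calc m ≤ ((X ∪ Y).filter (fun z => (G i).Adj y z)).card := hnb i h1 h2 y
      _ ≤ (insert x ((O.filter (fun c => (G i).Adj y (u c))).image u)).card := Finset.card_le_card hsub
      _ ≤ ((O.filter (fun c => (G i).Adj y (u c))).image u).card + 1 := Finset.card_insert_le _ _
      _ ≤ (O.filter (fun c => (G i).Adj y (u c))).card + 1 := by
          have := Finset.card_image_le (s := O.filter (fun c => (G i).Adj y (u c))) (f := u)
          omega
  -- A and B
  set A : Finset (ℕ × ℕ) := (O ×ˢ Ev).filter (fun p => (G p.1).Adj x (u p.2)) with hAdef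
  set B : Finset (ℕ × ℕ) := (O ×ˢ Ev).filter (fun p => (G p.2).Adj y (u p.1)) with hBdef
  have hdisjAB : Disjoint A B := by
    rw [Finset.disjoint_left]
    rintro ⟨c, d⟩ hA hB
    obtain ⟨hmemp, hadjA⟩ := Finset.mem_filter.mp hA
    obtain ⟨_, hadjB⟩ := Finset.mem_filter.mp hB
    obtain ⟨hcO, hdE⟩ := Finset.mem_product.mp hmemp
    obtain ⟨hc1, hc2⟩ := (hOmem c).mp hcO
    obtain ⟨hd1, hd2, hd3⟩ := (hEmem d).mp hdE
    exact L2 c d c (2 * n - 1) d (by omega) (by omega) (by omega) (by omega) (by omega)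
      (Or.inl rfl) (Or.inr (Or.inr rfl)) (Or.inr (Or.inl rfl))
      (by omega) (by omega) (by omega) hadjA hedge hadjB
  have hABcard : A.card + B.card ≤ (n - 1) * (n - 1) := by
    rw [← Finset.card_union_of_disjoint hdisjAB]
    calc (A ∪ B).card ≤ (O ×ˢ Ev).card :=
        Finset.card_le_card (Finset.union_subset (Finset.filter_subset _ _) (Finset.filter_subset _ _))
      _ = (n - 1) * (n - 1) := by rw [Finset.card_product, hOcard, hEcard]
  have hAsum : ∑ c ∈ O, (Ev.filter (fun d => (G c).Adj x (u d))).card = A.card := by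
    rw [Finset.card_eq_sum_card_fiberwise
      (fun p hp => (Finset.mem_product.mp (Finset.mem_filter.mp hp).1).1 : ∀ p ∈ A, p.1 ∈ O)]
    refine Finset.sum_congr rfl fun c hc => ?_
    have he : A.filter (fun p => p.1 = c) = (Ev.filter (fun d => (G c).Adj x (u d))).image (fun d => (c, d)) := by
      ext ⟨a, b⟩
      simp only [Finset.mem_filter, Finset.mem_image, Finset.mem_product, hAdef]
      constructor
      · rintro ⟨⟨⟨haO, hbE⟩, hadj⟩, rfl⟩
        exact ⟨b, ⟨hbE, hadj⟩, rfl⟩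
      · rintro ⟨d, ⟨hdE, hadj⟩, he2⟩
        obtain ⟨rfl, rfl⟩ := Prod.mk.injEq .. ▸ he2
        exact ⟨⟨⟨hc, hdE⟩, hadj⟩, rfl⟩
    rw [he, Finset.card_image_of_injective _ (fun a b h => by
      have := congrArg Prod.snd h; simpa using this)]
  have hBsum : ∑ d ∈ Ev, (O.filter (fun c => (G d).Adj y (u c))).card = B.card := by
    rw [Finset.card_eq_sum_card_fiberwise
      (fun p hp => (Finset.mem_product.mp (Finset.mem_filter.mp hp).1).2 : ∀ p ∈ B, p.2 ∈ Ev)]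
    refine Finset.sum_congr rfl fun d hd => ?_
    have he : B.filter (fun p => p.2 = d) = (O.filter (fun c => (G d).Adj y (u c))).image (fun c => (c, d)) := by
      ext ⟨a, b⟩
      simp only [Finset.mem_filter, Finset.mem_image, Finset.mem_product, hBdef]
      constructor
      · rintro ⟨⟨⟨haO, hbE⟩, hadj⟩, rfl⟩
        exact ⟨a, ⟨haO, hadj⟩, rfl⟩
      · rintro ⟨c, ⟨hcO, hadj⟩, he2⟩
        obtain ⟨rfl, rfl⟩ := Prod.mk.injEq .. ▸ he2
        exact ⟨⟨⟨hcO, hd⟩, hadj⟩, rfl⟩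
    rw [he, Finset.card_image_of_injective _ (fun a b h => by
      have := congrArg Prod.fst h; simpa using this)]
  set W : Finset ℕ := O.filter (fun c => (G c).Adj x y) with hWdef
  set W' : Finset ℕ := Ev.filter (fun d => (G d).Adj x y) with hW'def
  have hAlow : (n - 1) * m ≤ A.card + W.card := by
    have h1 : ∀ c ∈ O, m ≤ (Ev.filter (fun d => (G c).Adj x (u d))).card
        + (if (G c).Adj x y then 1 else 0) := by
      intro c hc
      obtain ⟨hc1, hc2⟩ := (hOmem c).mp hc
      by_cases hadj : (G c).Adj x y
      · rw [if_pos hadj]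
        exact hrowx' c (by omega) (by omega)
      · rw [if_neg hadj]
        simpa using hrowx c (by omega) (by omega) hadj
    calc (n - 1) * m = ∑ _c ∈ O, m := by rw [Finset.sum_const, hOcard, smul_eq_mul]
      _ ≤ ∑ c ∈ O, ((Ev.filter (fun d => (G c).Adj x (u d))).card + (if (G c).Adj x y then 1 else 0)) :=
          Finset.sum_le_sum h1
      _ = A.card + W.card := by
          rw [Finset.sum_add_distrib]
          have hw2 : (∑ c ∈ O, if (G c).Adj x y then 1 else 0) = W.card := by
            rw [hWdef, Finset.card_filter]
          rw [hAsum, hw2]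
  have hBlow : (n - 1) * m ≤ B.card + W'.card := by
    have h1 : ∀ d ∈ Ev, m ≤ (O.filter (fun c => (G d).Adj y (u c))).card
        + (if (G d).Adj x y then 1 else 0) := by
      intro d hd
      obtain ⟨hd1, hd2, hd3⟩ := (hEmem d).mp hd
      by_cases hadj : (G d).Adj x y
      · rw [if_pos hadj]
        exact hrowy' d (by omega) (by omega)
      · rw [if_neg hadj]
        simpa using hrowy d (by omega) (by omega) (fun h => hadj h.symm)
    calc (n - 1) * m = ∑ _d ∈ Ev, m := by rw [Finset.sum_const, hEcard, smul_eq_mul]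
      _ ≤ ∑ d ∈ Ev, ((O.filter (fun c => (G d).Adj y (u c))).card + (if (G d).Adj x y then 1 else 0)) :=
          Finset.sum_le_sum h1
      _ = B.card + W'.card := by
          rw [Finset.sum_add_distrib]
          have hw2 : (∑ d ∈ Ev, if (G d).Adj x y then 1 else 0) = W'.card := by
            rw [hW'def, Finset.card_filter]
          rw [hBsum, hw2]
  -- bound on W via some d0 with x u_{d0} ∈ G_{2n-1}
  have hWbound : W.card + m ≤ n - 1 := by
    obtain ⟨d0, hd0E, hd0adj⟩ : ∃ d0 ∈ Ev, (G (2 * n - 1)).Adj x (u d0) := by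
      have h := hrowx' (2 * n - 1) (by omega) le_rfl
      have hpos : 0 < (Ev.filter (fun d => (G (2 * n - 1)).Adj x (u d))).card := by omega
      obtain ⟨d0, hd0⟩ := Finset.card_pos.mp hpos
      exact ⟨d0, (Finset.mem_filter.mp hd0).1, (Finset.mem_filter.mp hd0).2⟩
    obtain ⟨hd01, hd02, hd03⟩ := (hEmem d0).mp hd0E
    have hnxyd0 : ¬ (G d0).Adj x y := fun h =>
      L1 d0 y x (by omega) (by omega) (Or.inr ⟨rfl, rfl⟩) h.symm hd0adj
    have hcol : m ≤ (O.filter (fun c => (G d0).Adj y (u c))).card :=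
      hrowy d0 (by omega) (by omega) (fun h => hnxyd0 h.symm)
    have hdisjW : Disjoint W (O.filter (fun c => (G d0).Adj y (u c))) := by
      rw [Finset.disjoint_left]
      intro c hcW hccol
      obtain ⟨hcO, hcadj⟩ := Finset.mem_filter.mp hcW
      obtain ⟨_, hcoladj⟩ := Finset.mem_filter.mp hccol
      obtain ⟨hc1, hc2⟩ := (hOmem c).mp hcO
      exact L2 c d0 (2 * n - 1) c d0 (by omega) (by omega) (by omega) (by omega) (by omega)
        (Or.inr (Or.inr rfl)) (Or.inl rfl) (Or.inr (Or.inl rfl))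
        (by omega) (by omega) (by omega) hd0adj hcadj hcoladj
    calc W.card + m ≤ W.card + (O.filter (fun c => (G d0).Adj y (u c))).card := by omega
      _ = (W ∪ O.filter (fun c => (G d0).Adj y (u c))).card :=
          (Finset.card_union_of_disjoint hdisjW).symm
      _ ≤ O.card := Finset.card_le_card (Finset.union_subset (Finset.filter_subset _ _) (Finset.filter_subset _ _))
      _ = n - 1 := hOcard
  have hW'bound : W'.card + m ≤ n - 1 := by
    obtain ⟨c0, hc0O, hc0adj⟩ : ∃ c0 ∈ O, (G (2 * n - 1)).Adj y (u c0) := by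
      have h := hrowy' (2 * n - 1) (by omega) le_rfl
      have hpos : 0 < (O.filter (fun c => (G (2 * n - 1)).Adj y (u c))).card := by omega
      obtain ⟨c0, hc0⟩ := Finset.card_pos.mp hpos
      exact ⟨c0, (Finset.mem_filter.mp hc0).1, (Finset.mem_filter.mp hc0).2⟩
    obtain ⟨hc01, hc02⟩ := (hOmem c0).mp hc0O
    have hnxyc0 : ¬ (G c0).Adj x y := fun h =>
      L1 c0 x y (by omega) (by omega) (Or.inl ⟨rfl, rfl⟩) h hc0adj
    have hcol : m ≤ (Ev.filter (fun d => (G c0).Adj x (u d))).card :=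
      hrowx c0 (by omega) (by omega) hnxyc0
    have hdisjW : Disjoint W' (Ev.filter (fun d => (G c0).Adj x (u d))) := by
      rw [Finset.disjoint_left]
      intro d hdW hdcol
      obtain ⟨hdE, hdadj⟩ := Finset.mem_filter.mp hdW
      obtain ⟨_, hcoladj⟩ := Finset.mem_filter.mp hdcol
      obtain ⟨hd1, hd2, hd3⟩ := (hEmem d).mp hdE
      exact L2 c0 d c0 d (2 * n - 1) (by omega) (by omega) (by omega) (by omega) (by omega)
        (Or.inl rfl) (Or.inr (Or.inl rfl)) (Or.inr (Or.inr rfl))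
        (by omega) (by omega) (by omega) hcoladj hdadj hc0adj
    calc W'.card + m ≤ W'.card + (Ev.filter (fun d => (G c0).Adj x (u d))).card := by omega
      _ = (W' ∪ Ev.filter (fun d => (G c0).Adj x (u d))).card :=
          (Finset.card_union_of_disjoint hdisjW).symm
      _ ≤ Ev.card := Finset.card_le_card (Finset.union_subset (Finset.filter_subset _ _) (Finset.filter_subset _ _))
      _ = n - 1 := hEcard
  -- final arithmetic
  obtain ⟨q, hq⟩ : ∃ q, n - 1 = q := ⟨n - 1, rfl⟩
  rw [hq] at hAlow hBlow hABcard hWbound hW'bound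
  have hqn : n = q + 1 := by omega
  have h2m : q + 1 ≤ 2 * m := by omega
  have hstep : (q + 1) * q ≤ (2 * m) * q := Nat.mul_le_mul_right q h2m
  have he1 : (q + 1) * q = q * q + q := by ring
  have he2 : (2 * m) * q = 2 * (q * m) := by ring
  have hfin1 : 2 * (q * m) + 2 * m ≤ q * q + 2 * q := by
    linarith only [hAlow, hBlow, hABcard, hWbound, hW'bound]
  have hfin2 : q * q + q ≤ 2 * (q * m) := by
    rw [← he2, ← he1]; exact hstep
  linarith only [hfin1, hfin2, h2m]
end

section
/- Let n be odd, and let G = {G_1, ..., G_{2n-1}} be bipartite graphs on bipartition (X, Y) with |X| = |Y| = n and δ(G_i) ≥ (n+1)/2 for each i. Fix x ∈ X, y ∈ Y and suppose that for each i, G_i - {x, y} equals K_{(n-1)/2,(n-1)/2} ∪ K_{(n-1)/2,(n-1)/2} with the same bipartition into X_1 ∪ X_2 and Y_1 ∪ Y_2 for all i. Then for each i ∈ [2n-1], G_i ∈ {F, F'}, where F has edges: all edges from x to Y\{y}, all edges from y to X\{x}, and all edges between X_j and Y_j for j = 1, 2; and F' = F + xy. -/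
open Finset

variable {V : Type*} [DecidableEq V]

theorem stmt11 (n : ℕ) (hodd : Odd n) (G : ℕ → SimpleGraph V) (X Y : Finset V)
    (hdisj : Disjoint X Y) (hcov : ∀ w : V, w ∈ X ∨ w ∈ Y)
    (hX : X.card = n) (hY : Y.card = n)
    (hbip : ∀ i, 1 ≤ i → i ≤ 2 * n - 1 → ∀ a b : V, (G i).Adj a b →
      (a ∈ X ∧ b ∈ Y) ∨ (a ∈ Y ∧ b ∈ X))
    (hdeg : ∀ i, 1 ≤ i → i ≤ 2 * n - 1 → ∀ a : V, (n + 1) / 2 ≤ ((G i).neighborSet a).ncard)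
    (x y : V) (hx : x ∈ X) (hy : y ∈ Y)
    (X1 X2 Y1 Y2 : Finset V)
    (hX12 : Disjoint X1 X2) (hY12 : Disjoint Y1 Y2)
    (hxn : x ∉ X1 ∪ X2) (hyn : y ∉ Y1 ∪ Y2)
    (hXu : insert x (X1 ∪ X2) = X) (hYu : insert y (Y1 ∪ Y2) = Y)
    (hc1 : X1.card = (n - 1) / 2) (hc2 : X2.card = (n - 1) / 2)
    (hc3 : Y1.card = (n - 1) / 2) (hc4 : Y2.card = (n - 1) / 2)
    (hH : ∀ i, 1 ≤ i → i ≤ 2 * n - 1 → ∀ a b : V,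
      a ≠ x → a ≠ y → b ≠ x → b ≠ y →
      ((G i).Adj a b ↔ ((a ∈ X1 ∧ b ∈ Y1) ∨ (b ∈ X1 ∧ a ∈ Y1) ∨
                        (a ∈ X2 ∧ b ∈ Y2) ∨ (b ∈ X2 ∧ a ∈ Y2)))) :
    ∀ i, 1 ≤ i → i ≤ 2 * n - 1 →
      ((∀ a b : V, (G i).Adj a b ↔ FAdj x y X1 X2 Y1 Y2 a b) ∨
       (∀ a b : V, (G i).Adj a b ↔
          (FAdj x y X1 X2 Y1 Y2 a b ∨ (a = x ∧ b = y) ∨ (a = y ∧ b = x)))) := by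
  intro i h1 h2
  obtain ⟨m, hm⟩ := hodd
  -- basic membership facts
  have hXsub : ∀ a ∈ X1 ∪ X2, a ∈ X := fun a ha => by
    rw [← hXu]; exact Finset.mem_insert_of_mem ha
  have hYsub : ∀ b ∈ Y1 ∪ Y2, b ∈ Y := fun b hb => by
    rw [← hYu]; exact Finset.mem_insert_of_mem hb
  have hXnY : ∀ a ∈ X, a ∉ Y := fun a ha => Finset.disjoint_left.1 hdisj ha
  have hneX : ∀ a ∈ X1 ∪ X2, a ≠ x ∧ a ≠ y := by
    intro a ha
    exact ⟨fun h => hxn (h ▸ ha), fun h => hXnY a (hXsub a ha) (h ▸ hy)⟩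
  have hneY : ∀ b ∈ Y1 ∪ Y2, b ≠ x ∧ b ≠ y := by
    intro b hb
    exact ⟨fun h => hXnY x hx (h ▸ hYsub b hb), fun h => hyn (h ▸ hb)⟩
  -- every vertex of X1 ∪ X2 is adjacent to y
  have adjY : ∀ a ∈ X1 ∪ X2, (G i).Adj a y := by
    intro a ha
    obtain ⟨hax, hay⟩ := hneX a ha
    obtain ⟨Z, hZc, hZ⟩ : ∃ Z : Finset V, Z.card = (n - 1) / 2 ∧
        ∀ b, b ≠ y → (G i).Adj a b → b ∈ Z := by
      have key : ∀ Z1 Z2 : Finset V, a ∈ Z1 → Disjoint Z1 Z2 → (Z1 = X1 ∧ Z2 = X2) ∨ (Z1 = X2 ∧ Z2 = X1) → True := fun _ _ _ _ _ => trivial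
      rcases Finset.mem_union.1 ha with h | h
      · refine ⟨Y1, hc3, fun b hby hadj => ?_⟩
        have hbY : b ∈ Y := by
          rcases hbip i h1 h2 a b hadj with ⟨_, hb⟩ | ⟨ha', _⟩
          · exact hb
          · exact absurd ha' (hXnY a (hXsub a ha))
        have hbx : b ≠ x := fun hbx => hXnY x hx (hbx ▸ hbY)
        rcases (hH i h1 h2 a b hax hay hbx hby).1 hadj with
          ⟨_, hb⟩ | ⟨_, ha'⟩ | ⟨ha', _⟩ | ⟨_, ha'⟩
        · exact hb
        · exact absurd ha' (fun hh => hXnY a (hXsub a ha) (hYsub a (Finset.mem_union_left _ hh)))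
        · exact absurd ha' (Finset.disjoint_left.1 hX12 h)
        · exact absurd ha' (fun hh => hXnY a (hXsub a ha) (hYsub a (Finset.mem_union_right _ hh)))
      · refine ⟨Y2, hc4, fun b hby hadj => ?_⟩
        have hbY : b ∈ Y := by
          rcases hbip i h1 h2 a b hadj with ⟨_, hb⟩ | ⟨ha', _⟩
          · exact hb
          · exact absurd ha' (hXnY a (hXsub a ha))
        have hbx : b ≠ x := fun hbx => hXnY x hx (hbx ▸ hbY)
        rcases (hH i h1 h2 a b hax hay hbx hby).1 hadj with
          ⟨ha', _⟩ | ⟨_, ha'⟩ | ⟨_, hb⟩ | ⟨_, ha'⟩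
        · exact absurd ha' (Finset.disjoint_right.1 hX12 h)
        · exact absurd ha' (fun hh => hXnY a (hXsub a ha) (hYsub a (Finset.mem_union_left _ hh)))
        · exact hb
        · exact absurd ha' (fun hh => hXnY a (hXsub a ha) (hYsub a (Finset.mem_union_right _ hh)))
    by_contra hnadj
    have hsub : (G i).neighborSet a ⊆ ↑Z := by
      intro b hb
      have hadj : (G i).Adj a b := hb
      have hby : b ≠ y := fun h => hnadj (h ▸ hadj)
      exact hZ b hby hadj
    have := Set.ncard_le_ncard hsub (Finset.finite_toSet Z)
    rw [Set.ncard_coe_finset, hZc] at this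
    have hd := hdeg i h1 h2 a
    omega
  -- x is adjacent to every vertex of Y1 ∪ Y2
  have adjX : ∀ b ∈ Y1 ∪ Y2, (G i).Adj x b := by
    intro b hb
    obtain ⟨hbx, hby⟩ := hneY b hb
    obtain ⟨Z, hZc, hZ⟩ : ∃ Z : Finset V, Z.card = (n - 1) / 2 ∧
        ∀ a, a ≠ x → (G i).Adj a b → a ∈ Z := by
      rcases Finset.mem_union.1 hb with h | h
      · refine ⟨X1, hc1, fun a hax hadj => ?_⟩
        have haX : a ∈ X := by
          rcases hbip i h1 h2 a b hadj with ⟨ha', _⟩ | ⟨_, hb'⟩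
          · exact ha'
          · exact absurd hb' (fun hh => hXnY b hh (hYsub b hb))
        have hay : a ≠ y := fun h => hXnY a haX (h ▸ hy)
        rcases (hH i h1 h2 a b hax hay hbx hby).1 hadj with
          ⟨ha', _⟩ | ⟨hb', _⟩ | ⟨_, hb'⟩ | ⟨hb', _⟩
        · exact ha'
        · exact absurd hb' (fun hh => hXnY b (hXsub b (Finset.mem_union_left _ hh)) (hYsub b hb))
        · exact absurd hb' (Finset.disjoint_left.1 hY12 h)
        · exact absurd hb' (fun hh => hXnY b (hXsub b (Finset.mem_union_right _ hh)) (hYsub b hb))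
      · refine ⟨X2, hc2, fun a hax hadj => ?_⟩
        have haX : a ∈ X := by
          rcases hbip i h1 h2 a b hadj with ⟨ha', _⟩ | ⟨_, hb'⟩
          · exact ha'
          · exact absurd hb' (fun hh => hXnY b hh (hYsub b hb))
        have hay : a ≠ y := fun h => hXnY a haX (h ▸ hy)
        rcases (hH i h1 h2 a b hax hay hbx hby).1 hadj with
          ⟨_, hb'⟩ | ⟨hb', _⟩ | ⟨ha', _⟩ | ⟨hb', _⟩
        · exact absurd hb' (Finset.disjoint_right.1 hY12 h)
        · exact absurd hb' (fun hh => hXnY b (hXsub b (Finset.mem_union_left _ hh)) (hYsub b hb))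
        · exact ha'
        · exact absurd hb' (fun hh => hXnY b (hXsub b (Finset.mem_union_right _ hh)) (hYsub b hb))
    by_contra hnadj
    have hsub : (G i).neighborSet b ⊆ ↑Z := by
      intro a ha'
      have hadj : (G i).Adj b a := ha'
      have hax : a ≠ x := fun h => hnadj (h ▸ hadj.symm)
      exact hZ a hax hadj.symm
    have := Set.ncard_le_ncard hsub (Finset.finite_toSet Z)
    rw [Set.ncard_coe_finset, hZc] at this
    have hd := hdeg i h1 h2 b
    omega
  -- forward direction
  have fwd : ∀ a b : V, (G i).Adj a b →
      FAdj x y X1 X2 Y1 Y2 a b ∨ (a = x ∧ b = y) ∨ (a = y ∧ b = x) := by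
    intro a b hadj
    have mem : ∀ c d : V, c ∈ X → d ∈ Y → (G i).Adj c d →
        FAdj x y X1 X2 Y1 Y2 c d ∨ (c = x ∧ d = y) := by
      intro c d hc hd hcd
      by_cases hcx : c = x
      · by_cases hdy : d = y
        · exact Or.inr ⟨hcx, hdy⟩
        · have : d ∈ Y1 ∪ Y2 := by
            rw [← hYu] at hd
            rcases Finset.mem_insert.1 hd with h | h
            · exact absurd h hdy
            · exact h
          exact Or.inl (Or.inl ⟨hcx, this⟩)
      · have hcX12 : c ∈ X1 ∪ X2 := by
          rw [← hXu] at hc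
          rcases Finset.mem_insert.1 hc with h | h
          · exact absurd h hcx
          · exact h
        by_cases hdy : d = y
        · exact Or.inl (Or.inr (Or.inr (Or.inr (Or.inl ⟨hdy, hcX12⟩))))
        · have hdY12 : d ∈ Y1 ∪ Y2 := by
            rw [← hYu] at hd
            rcases Finset.mem_insert.1 hd with h | h
            · exact absurd h hdy
            · exact h
          have hcy : c ≠ y := fun h => hXnY c hc (h ▸ hy)
          have hdx : d ≠ x := fun h => hXnY x hx (h ▸ hd)
          rcases (hH i h1 h2 c d hcx hcy hdx hdy).1 hcd with h | h | h | h
          · exact Or.inl (Or.inr (Or.inr (Or.inr (Or.inr (Or.inl h)))))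
          · exact Or.inl (Or.inr (Or.inr (Or.inr (Or.inr (Or.inr (Or.inl h))))))
          · exact Or.inl (Or.inr (Or.inr (Or.inr (Or.inr (Or.inr (Or.inr (Or.inl h)))))))
          · exact Or.inl (Or.inr (Or.inr (Or.inr (Or.inr (Or.inr (Or.inr (Or.inr h)))))))
    rcases hbip i h1 h2 a b hadj with ⟨ha, hb⟩ | ⟨ha, hb⟩
    · rcases mem a b ha hb hadj with h | h
      · exact Or.inl h
      · exact Or.inr (Or.inl h)
    · rcases mem b a hb ha hadj.symm with h | ⟨h1', h2'⟩
      · refine Or.inl ?_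
        rcases h with h | h | h | h | h | h | h | h
        · exact Or.inr (Or.inl h)
        · exact Or.inl h
        · exact Or.inr (Or.inr (Or.inr (Or.inl h)))
        · exact Or.inr (Or.inr (Or.inl h))
        · exact Or.inr (Or.inr (Or.inr (Or.inr (Or.inr (Or.inl h)))))
        · exact Or.inr (Or.inr (Or.inr (Or.inr (Or.inl h))))
        · exact Or.inr (Or.inr (Or.inr (Or.inr (Or.inr (Or.inr (Or.inr h))))))
        · exact Or.inr (Or.inr (Or.inr (Or.inr (Or.inr (Or.inr (Or.inl h))))))
      · exact Or.inr (Or.inr ⟨h2', h1'⟩)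
  -- backward direction
  have bwd : ∀ a b : V, FAdj x y X1 X2 Y1 Y2 a b → (G i).Adj a b := by
    intro a b h
    rcases h with ⟨rfl, hb⟩ | ⟨rfl, ha⟩ | ⟨rfl, hb⟩ | ⟨rfl, ha⟩ |
      ⟨ha, hb⟩ | ⟨hb, ha⟩ | ⟨ha, hb⟩ | ⟨hb, ha⟩
    · exact adjX b hb
    · exact (adjX a ha).symm
    · exact (adjY b hb).symm
    · exact adjY a ha
    · exact (hH i h1 h2 a b (hneX a (Finset.mem_union_left _ ha)).1
        (hneX a (Finset.mem_union_left _ ha)).2 (hneY b (Finset.mem_union_left _ hb)).1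
        (hneY b (Finset.mem_union_left _ hb)).2).2 (Or.inl ⟨ha, hb⟩)
    · exact (hH i h1 h2 a b (hneY a (Finset.mem_union_left _ ha)).1
        (hneY a (Finset.mem_union_left _ ha)).2 (hneX b (Finset.mem_union_left _ hb)).1
        (hneX b (Finset.mem_union_left _ hb)).2).2 (Or.inr (Or.inl ⟨hb, ha⟩))
    · exact (hH i h1 h2 a b (hneX a (Finset.mem_union_right _ ha)).1
        (hneX a (Finset.mem_union_right _ ha)).2 (hneY b (Finset.mem_union_right _ hb)).1
        (hneY b (Finset.mem_union_right _ hb)).2).2 (Or.inr (Or.inr (Or.inl ⟨ha, hb⟩)))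
    · exact (hH i h1 h2 a b (hneY a (Finset.mem_union_right _ ha)).1
        (hneY a (Finset.mem_union_right _ ha)).2 (hneX b (Finset.mem_union_right _ hb)).1
        (hneX b (Finset.mem_union_right _ hb)).2).2 (Or.inr (Or.inr (Or.inr ⟨hb, ha⟩)))
  by_cases hxy : (G i).Adj x y
  · right
    intro a b
    constructor
    · exact fwd a b
    · rintro (h | ⟨rfl, rfl⟩ | ⟨rfl, rfl⟩)
      · exact bwd a b h
      · exact hxy
      · exact hxy.symm
  · left
    intro a b
    constructor
    · intro h
      rcases fwd a b h with h' | ⟨rfl, rfl⟩ | ⟨rfl, rfl⟩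
      · exact h'
      · exact absurd h hxy
      · exact absurd h.symm hxy
    · exact bwd a b
end

section
/- Let n ≥ 3 and let G, C, D, x, y be as in the auxiliary digraph setup with δ(G_i) ≥ ⌈(n+1)/2⌉ for all i ∈ [2n-1]. If d⁻_D(y) ≥ ⌊n/2⌋, then there exists a G-transversal isomorphic to a Hamiltonian path between x and y. -/
open Finset

variable {V : Type*} [DecidableEq V]

/-!
The colour `2n-1` is not used on `C`, and `x` has a neighbour `u k ≠ y` in `G (2n-1)`, with `k`
even because `G (2n-1)` is bipartite. Going from `x` to `u k` and then backwards around `C` gives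
a rainbow path `x, u k, u (k-1), …, u (k+1)` (indices mod `2n-2`) avoiding the colour `k` and
ending at `z = u (k+1) ∈ X`. If `z y ∈ G k`, appending `y` finishes. If `z u (i+1) ∈ G k` for an
in-neighbour `u i` of `y` in `D`, a Pósa rotation along this chord makes the path end at `u i` and
frees the colour `i`, and we append `y` through `u i y ∈ G i`. Otherwise the `G k`-neighbours of
`z` and the vertices `u (i+1)`, `u i ∈ N⁻_D(y)`, are disjoint subsets of `Y \ {y}`, so
`deg_{G k}(z) + d⁻_D(y) ≤ n - 1`, which the degree bounds rule out.
-/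

theorem Set.InjOn.update_insert {α β : Type*} [DecidableEq α] {f : α → β} {s : Set α} {a : α}
    {b : β} (hf : Set.InjOn f s) (ha : a ∉ s) (hb : b ∉ f '' s) :
    Set.InjOn (Function.update f a b) (insert a s) := by
  have heq : Set.EqOn (Function.update f a b) f s := fun x hx =>
    Function.update_of_ne (ne_of_mem_of_not_mem hx ha) _ _
  rw [Set.injOn_insert ha, heq.image_eq, Function.update_self]
  exact ⟨hf.congr heq.symm, hb⟩

namespace IsRainbowPath

variable {V : Type*} {G : ℕ → SimpleGraph V} {s L : ℕ} {v : ℕ → V} {φ : ℕ → ℕ}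

theorem exists_snoc (h : IsRainbowPath G s L v φ) {y : V} {c : ℕ} (hy : y ∉ v '' Set.Iic L)
    (hc : c ∉ φ '' Set.Iio L) (hc1 : 1 ≤ c) (hcs : c ≤ s) (hadj : (G c).Adj (v L) y) :
    ∃ v' φ', IsRainbowPath G s (L + 1) v' φ' ∧ v' 0 = v 0 ∧ v' (L + 1) = y := by
  obtain ⟨hv, hφ, hcol, hedge⟩ := h
  refine ⟨Function.update v (L + 1) y, Function.update φ L c, ⟨?_, ?_, ?_, ?_⟩, by simp, by simp⟩
  · rw [show Set.Iic (L + 1) = insert (L + 1) (Set.Iic L) by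
      ext r; simp only [Set.mem_insert_iff, Set.mem_Iic]; omega]
    exact hv.update_insert (by simp) hy
  · rw [show Set.Iio (L + 1) = insert L (Set.Iio L) by
      ext r; simp only [Set.mem_insert_iff, Set.mem_Iio]; omega]
    exact hφ.update_insert (by simp) hc
  · intro i hi
    rw [Function.update_apply]
    split_ifs
    · exact ⟨hc1, hcs⟩
    · exact hcol i (by omega)
  · intro i hi
    rcases Nat.lt_succ_iff_lt_or_eq.mp hi with hi | rfl
    · simpa [Function.update_apply, hi.ne, show i ≠ L + 1 by omega, show i + 1 ≠ L + 1 by omega]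
        using hedge i hi
    · simpa using hadj

/-- Pósa rotation: a chord `v L – v j` of an unused colour turns the path
`v 0 … v j v (j+1) … v L` into `v 0 … v j v L … v (j+1)`, which frees the colour of
`v j – v (j+1)`. -/
theorem exists_rotate (h : IsRainbowPath G s L v φ) {j c : ℕ} (hj : j < L)
    (hc : c ∉ φ '' Set.Iio L) (hc1 : 1 ≤ c) (hcs : c ≤ s) (hadj : (G c).Adj (v L) (v j)) :
    ∃ v' φ', IsRainbowPath G s L v' φ' ∧ v' 0 = v 0 ∧ v' L = v (j + 1) ∧
      v' '' Set.Iic L ⊆ v '' Set.Iic L ∧ φ j ∉ φ' '' Set.Iio L := by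
  obtain ⟨hv, hφ, hcol, hedge⟩ := h
  set π : ℕ → ℕ := fun r => if r ≤ j then r else L + j + 1 - r with hπ
  set σ : ℕ → ℕ := fun r => if r < j then r else L + j - r with hσ
  have hπL : ∀ r ≤ L, π r ≤ L := fun r hr => by simp only [hπ]; split_ifs <;> omega
  have hσL : ∀ r < L, r ≠ j → σ r < L ∧ σ r ≠ j := fun r hr hrj => by
    simp only [hσ]; split_ifs <;> omega
  refine ⟨v ∘ π, fun r => if r = j then c else φ (σ r), ⟨?_, ?_, ?_, ?_⟩, ?_, ?_, ?_, ?_⟩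
  · intro a ha b hb hab
    have := hv (hπL a ha) (hπL b hb) hab
    simp only [Set.mem_Iic] at ha hb
    simp only [hπ] at this; split_ifs at this <;> omega
  · intro a ha b hb hab
    simp only at hab
    split_ifs at hab with haj hbj hbj
    · omega
    · exact absurd ⟨σ b, (hσL b hb hbj).1, hab.symm⟩ hc
    · exact absurd ⟨σ a, (hσL a ha haj).1, hab⟩ hc
    · have := hφ (hσL a ha haj).1 (hσL b hb hbj).1 hab
      simp only [Set.mem_Iio] at ha hb
      simp only [hσ] at this; split_ifs at this <;> omega
  · intro r hr
    simp only
    split_ifs with hrj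
    · exact ⟨hc1, hcs⟩
    · exact hcol _ (hσL r hr hrj).1
  · intro r hr
    simp only [Function.comp, hπ, hσ]
    rcases lt_trichotomy r j with hrj | rfl | hrj
    · simpa [hrj.le, hrj.ne, hrj, show r + 1 ≤ j by omega] using hedge r (by omega)
    · simpa [show L + r + 1 - (r + 1) = L by omega] using hadj.symm
    · have := (hedge (L + j - r) (by omega)).symm
      simpa [hrj.ne', show ¬ r ≤ j by omega, show ¬ r < j by omega, show ¬ r + 1 ≤ j by omega,
        show L + j - r + 1 = L + j + 1 - r by omega, show L + j + 1 - (r + 1) = L + j - r by omega]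
        using this
  · simp [hπ]
  · simp [hπ, not_le.mpr hj, show L + j + 1 - L = j + 1 by omega]
  · rintro _ ⟨r, hr, rfl⟩
    exact ⟨π r, hπL r hr, rfl⟩
  · rintro ⟨r, hr, hrφ⟩
    simp only at hrφ
    split_ifs at hrφ with hrj
    · exact hc ⟨j, hj, hrφ.symm⟩
    · exact (hσL r hr hrj).2 (hφ (hσL r hr hrj).1 hj hrφ)

theorem hasRainbowHamPathBetween_of_adj [Finite V] {n c : ℕ} {y : V}
    (h : IsRainbowPath G s L v φ) (hL : L + 1 = 2 * n - 1) (hV : Nat.card V ≤ L + 2)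
    (hy : y ∉ v '' Set.Iic L) (hc : c ∉ φ '' Set.Iio L) (hc1 : 1 ≤ c) (hcs : c ≤ s)
    (hadj : (G c).Adj (v L) y) :
    HasRainbowHamPathBetween G s n (v 0) y := by
  obtain ⟨v', φ', h', h0, h1⟩ := h.exists_snoc hy hc hc1 hcs hadj
  rw [hL] at h' h1
  have himage : v' '' Set.Iic (2 * n - 1) = Set.univ := by
    refine Set.eq_of_subset_of_ncard_le (Set.subset_univ _) ?_
    rw [Set.ncard_univ, h'.1.ncard_image, Set.ncard_Iic_nat]
    omega
  refine ⟨v', φ', h', h0, h1, fun w => ?_⟩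
  obtain ⟨r, hr, rfl⟩ := himage ▸ Set.mem_univ w
  exact ⟨r, hr, rfl⟩

end IsRainbowPath

/-- Walking backwards around the cycle `u 1 … u N` from `u k`, the `r`-th vertex (`1 ≤ r ≤ N`) is
`u (backIdx N k r)`, and the edge from it to the next one has colour `backIdx N k (r + 1)`. -/
def backIdx (N k r : ℕ) : ℕ := if r ≤ k then k + 1 - r else N + k + 1 - r

section Cycle

variable {V : Type*} {G : ℕ → SimpleGraph V} {N : ℕ} {u : ℕ → V}

theorem isRainbowPath_backIdx {s k : ℕ} {x : V} (hk1 : 1 ≤ k) (hkN : k ≤ N) (hNs : N < s)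
    (hu : Set.InjOn u (Set.Icc 1 N)) (hx : ∀ i, 1 ≤ i → i ≤ N → u i ≠ x)
    (hC : ∀ i, 1 ≤ i → i < N → (G i).Adj (u i) (u (i + 1))) (hC2 : (G N).Adj (u N) (u 1))
    (hxk : (G s).Adj x (u k)) :
    IsRainbowPath G s N (fun r => if r = 0 then x else u (backIdx N k r))
      (fun r => if r = 0 then s else backIdx N k (r + 1)) := by
  have hmem : ∀ r, 1 ≤ r → r ≤ N → 1 ≤ backIdx N k r ∧ backIdx N k r ≤ N := by
    intro r h1 h2; unfold backIdx; split_ifs <;> omega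
  have hinj : ∀ a b, 1 ≤ a → a ≤ N → 1 ≤ b → b ≤ N → backIdx N k a = backIdx N k b → a = b := by
    intro a b; unfold backIdx; split_ifs <;> omega
  have hcyc : ∀ b, 1 ≤ b → b ≤ N → (G b).Adj (u b) (u (if b = N then 1 else b + 1)) := by
    intro b h1 h2
    split_ifs with hbN
    · exact hbN ▸ hC2
    · exact hC b h1 (by omega)
  refine ⟨?_, ?_, ?_, ?_⟩
  · intro a ha b hb hab
    simp only [Set.mem_Iic] at ha hb
    simp only at hab
    split_ifs at hab with ha0 hb0 hb0
    · omega
    · exact absurd hab.symm (hx _ (hmem b (by omega) hb).1 (hmem b (by omega) hb).2)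
    · exact absurd hab (hx _ (hmem a (by omega) ha).1 (hmem a (by omega) ha).2)
    · exact hinj a b (by omega) ha (by omega) hb
        (hu (hmem a (by omega) ha) (hmem b (by omega) hb) hab)
  · intro a ha b hb hab
    simp only [Set.mem_Iio] at ha hb
    simp only at hab
    split_ifs at hab with ha0 hb0 hb0
    · omega
    · have := hmem (b + 1) (by omega) (by omega); omega
    · have := hmem (a + 1) (by omega) (by omega); omega
    · have := hinj (a + 1) (b + 1) (by omega) (by omega) (by omega) (by omega) hab; omega
  · intro r hr
    simp only
    split_ifs
    · omega
    · have := hmem (r + 1) (by omega) (by omega); omega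
  · intro r hr
    simp only [Nat.add_one_ne_zero, if_false]
    split_ifs with hr0
    · subst hr0
      simpa [backIdx, hk1] using hxk
    · have hsucc : backIdx N k r =
          if backIdx N k (r + 1) = N then 1 else backIdx N k (r + 1) + 1 := by
        unfold backIdx; split_ifs <;> omega
      obtain ⟨h1, h2⟩ := hmem (r + 1) (by omega) (by omega)
      rw [hsucc]
      exact (hcyc _ h1 h2).symm

theorem exists_isRainbowPath_through_cycle {s k : ℕ} {x y : V} (hk1 : 1 ≤ k) (hkN : k ≤ N)
    (hNs : N < s) (hu : Set.InjOn u (Set.Icc 1 N))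
    (huxy : ∀ i, 1 ≤ i → i ≤ N → u i ≠ x ∧ u i ≠ y) (hxy : x ≠ y)
    (hC : ∀ i, 1 ≤ i → i < N → (G i).Adj (u i) (u (i + 1))) (hC2 : (G N).Adj (u N) (u 1))
    (hxk : (G s).Adj x (u k)) :
    ∃ v φ, IsRainbowPath G s N v φ ∧ v 0 = x ∧ v N = u (if k = N then 1 else k + 1) ∧
      y ∉ v '' Set.Iic N ∧ k ∉ φ '' Set.Iio N ∧
      ∀ i, 1 ≤ i → i < N → i ≠ k → ∃ j < N, v j = u (i + 1) ∧ v (j + 1) = u i ∧ φ j = i := by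
  refine ⟨_, _, isRainbowPath_backIdx hk1 hkN hNs hu (fun i h1 h2 => (huxy i h1 h2).1) hC hC2 hxk,
    rfl, ?_, ?_, ?_, ?_⟩
  · simp only [show N ≠ 0 by omega, if_false, backIdx]
    congr 1; split_ifs <;> omega
  · rintro ⟨r, hr, hry⟩
    simp only [Set.mem_Iic] at hr
    simp only at hry
    split_ifs at hry with hr0
    · exact hxy hry
    · refine (huxy _ ?_ ?_).2 hry <;> unfold backIdx <;> split_ifs <;> omega
  · rintro ⟨r, hr, hrk⟩
    simp only [Set.mem_Iio] at hr
    simp only at hrk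
    split_ifs at hrk with hr0
    · omega
    · unfold backIdx at hrk; split_ifs at hrk <;> omega
  · intro i hi1 hiN hik
    rcases lt_or_gt_of_ne hik with hik | hik
    · refine ⟨k - i, by omega, ?_⟩
      simp only [backIdx, if_pos (show k - i ≤ k by omega), if_pos (show k - i + 1 ≤ k by omega),
        show k - i ≠ 0 by omega, Nat.add_one_ne_zero, if_false]
      exact ⟨congrArg u (by omega), congrArg u (by omega), by omega⟩
    · refine ⟨N + k - i, by omega, ?_⟩
      simp only [backIdx, if_neg (show ¬ N + k - i ≤ k by omega),
        if_neg (show ¬ N + k - i + 1 ≤ k by omega), show N + k - i ≠ 0 by omega,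
        Nat.add_one_ne_zero, if_false]
      exact ⟨congrArg u (by omega), congrArg u (by omega), by omega⟩

end Cycle

theorem exists_even_adj_of_one_lt_ncard {V : Type*} {G : SimpleGraph V} {N : ℕ}
    {X Y : Finset V} {u : ℕ → V} {x y : V} (hdisj : Disjoint X Y) (hxY : ∀ b, G.Adj x b → b ∈ Y)
    (hodd : ∀ i, 1 ≤ i → i ≤ N → Odd i → u i ∈ X)
    (hcov : ∀ w, w = x ∨ w = y ∨ ∃ i, 1 ≤ i ∧ i ≤ N ∧ u i = w)
    (hdeg : 1 < (G.neighborSet x).ncard) :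
    ∃ k, 1 ≤ k ∧ k ≤ N ∧ Even k ∧ G.Adj x (u k) := by
  obtain ⟨w, hxw, hwy⟩ := Set.exists_ne_of_one_lt_ncard hdeg y
  obtain rfl | rfl | ⟨k, hk1, hkN, rfl⟩ := hcov w
  · exact absurd hxw (G.irrefl)
  · exact absurd rfl hwy
  refine ⟨k, hk1, hkN, Nat.not_odd_iff_even.mp fun hk => ?_, hxw⟩
  exact Finset.disjoint_left.mp hdisj (hodd k hk1 hkN hk) (hxY _ hxw)

theorem ncard_neighborSet_add_inDegD_le {V : Type*} {G : ℕ → SimpleGraph V} {n c : ℕ}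
    {Y : Finset V} {u : ℕ → V} {y z : V} (hY : Y.card = n) (hyY : y ∈ Y)
    (hzY : ∀ b, (G c).Adj z b → b ∈ Y) (hu : Set.InjOn u (Set.Icc 1 (2 * n - 2)))
    (hupar : ∀ i, 1 ≤ i → i ≤ 2 * n - 2 → Even i → u i ∈ Y) (hzy : ¬ (G c).Adj z y)
    (hno : ∀ i, Odd i → 1 ≤ i → i ≤ 2 * n - 3 → (G i).Adj (u i) y → ¬ (G c).Adj z (u (i + 1))) :
    ((G c).neighborSet z).ncard + inDegD G n u y ≤ n - 1 := by
  set S := {i : ℕ | Odd i ∧ 1 ≤ i ∧ i ≤ 2 * n - 3 ∧ (G i).Adj (u i) y ∧ y ≠ u (i + 1)}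
  have hfin : ((Y : Set V) \ {y}).Finite := Y.finite_toSet.sdiff
  have hsub : (G c).neighborSet z ∪ (fun i => u (i + 1)) '' S ⊆ (Y : Set V) \ {y} := by
    rintro b (hb | ⟨i, ⟨hi, hi1, hi2, -, hyi⟩, rfl⟩)
    · exact ⟨hzY b hb, fun hby => hzy (by rwa [Set.mem_singleton_iff.mp hby] at hb)⟩
    · exact ⟨hupar (i + 1) (by omega) (by omega) hi.add_one, Ne.symm hyi⟩
  have hdisj : Disjoint ((G c).neighborSet z) ((fun i => u (i + 1)) '' S) := by
    rw [Set.disjoint_right]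
    rintro _ ⟨i, ⟨hi, hi1, hi2, hiy, -⟩, rfl⟩ hzi
    exact hno i hi hi1 hi2 hiy hzi
  have hinj : Set.InjOn (fun i => u (i + 1)) S := by
    rintro a ⟨-, ha1, ha2, -⟩ b ⟨-, hb1, hb2, -⟩ hab
    have := hu (by simp only [Set.mem_Icc]; omega) (by simp only [Set.mem_Icc]; omega) hab
    omega
  calc ((G c).neighborSet z).ncard + inDegD G n u y
      = ((G c).neighborSet z).ncard + ((fun i => u (i + 1)) '' S).ncard := by
        rw [hinj.ncard_image]; rfl
    _ = ((G c).neighborSet z ∪ (fun i => u (i + 1)) '' S).ncard :=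
        (Set.ncard_union_eq hdisj (hfin.subset (Set.subset_union_left.trans hsub))
          (hfin.subset (Set.subset_union_right.trans hsub))).symm
    _ ≤ ((Y : Set V) \ {y}).ncard := Set.ncard_le_ncard hsub hfin
    _ = n - 1 := by rw [Set.ncard_sdiff_singleton_of_mem (by simpa), Set.ncard_coe_finset, hY]

theorem finite_and_natCard_le_of_forall_eq_or {V : Type*} {N : ℕ} {u : ℕ → V} {x y : V}
    (h : ∀ w : V, w = x ∨ w = y ∨ ∃ i, 1 ≤ i ∧ i ≤ N ∧ u i = w) :
    Finite V ∧ Nat.card V ≤ N + 2 := by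
  set T := insert x (insert y (u '' Set.Icc 1 N))
  have hT : Set.univ ⊆ T := by
    intro w _
    rcases h w with rfl | rfl | ⟨i, hi1, hi2, rfl⟩
    · exact Set.mem_insert _ _
    · exact Set.mem_insert_of_mem _ (Set.mem_insert _ _)
    · exact Set.mem_insert_of_mem _ (Set.mem_insert_of_mem _ ⟨i, ⟨hi1, hi2⟩, rfl⟩)
  have hfin : T.Finite := (((Set.finite_Icc 1 N).image u).insert _).insert _
  refine ⟨Set.finite_univ_iff.mp (hfin.subset hT), ?_⟩
  calc Nat.card V = (Set.univ : Set V).ncard := (Set.ncard_univ V).symm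
    _ ≤ T.ncard := Set.ncard_le_ncard hT hfin
    _ ≤ (u '' Set.Icc 1 N).ncard + 1 + 1 :=
        (Set.ncard_insert_le _ _).trans (Nat.add_le_add_right (Set.ncard_insert_le _ _) 1)
    _ ≤ Set.ncard (Set.Icc 1 N) + 2 := by
        have := Set.ncard_image_le (f := u) (Set.finite_Icc 1 N); omega
    _ = N + 2 := by rw [Set.ncard_Icc_nat]; omega

theorem stmt13_general (n : ℕ) (hn : 3 ≤ n) (G : ℕ → SimpleGraph V) (X Y : Finset V)
    (hdisj : Disjoint X Y) (hY : Y.card = n)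
    (hbip : ∀ i, 1 ≤ i → i ≤ 2 * n - 1 → ∀ a b : V, (G i).Adj a b →
      (a ∈ X ∧ b ∈ Y) ∨ (a ∈ Y ∧ b ∈ X))
    (hdeg : ∀ i, 1 ≤ i → i ≤ 2 * n - 1 → ∀ a : V, (n + 2) / 2 ≤ ((G i).neighborSet a).ncard)
    (u : ℕ → V) (x y : V)
    (huinj : Set.InjOn u (Set.Icc 1 (2 * n - 2)))
    (hxX : x ∈ X) (hyY : y ∈ Y)
    (huxy : ∀ i, 1 ≤ i → i ≤ 2 * n - 2 → u i ≠ x ∧ u i ≠ y)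
    (hupar : ∀ i, 1 ≤ i → i ≤ 2 * n - 2 → (Odd i → u i ∈ X) ∧ (Even i → u i ∈ Y))
    (hucov : ∀ w : V, w = x ∨ w = y ∨ ∃ i, 1 ≤ i ∧ i ≤ 2 * n - 2 ∧ u i = w)
    (hC : ∀ i, 1 ≤ i → i ≤ 2 * n - 3 → (G i).Adj (u i) (u (i + 1)))
    (hC2 : (G (2 * n - 2)).Adj (u (2 * n - 2)) (u 1))
    (hyin : n / 2 ≤ inDegD G n u y) :
    HasRainbowHamPathBetween G (2 * n - 1) n x y := by
  obtain ⟨_, hV⟩ := finite_and_natCard_le_of_forall_eq_or hucov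
  have hside : ∀ c, 1 ≤ c → c ≤ 2 * n - 1 → ∀ a b, a ∈ X → (G c).Adj a b → b ∈ Y :=
    fun c h1 h2 a b ha hab => ((hbip c h1 h2 a b hab).resolve_right
      fun h => Finset.disjoint_left.mp hdisj ha h.1).2
  obtain ⟨k, hk1, hkN, hk, hxk⟩ := exists_even_adj_of_one_lt_ncard hdisj
    (hside _ (by omega) le_rfl x · hxX) (fun i h1 h2 => (hupar i h1 h2).1) hucov
    (by have := hdeg (2 * n - 1) (by omega) le_rfl x; omega)
  obtain ⟨Q, φ, hQ, rfl, hQN, hyQ, hkQ, hQedge⟩ := exists_isRainbowPath_through_cycle hk1 hkN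
    (s := 2 * n - 1) (by omega) huinj huxy (fun h => Finset.disjoint_left.mp hdisj hxX (h ▸ hyY))
    (fun i h1 h2 => hC i h1 (by omega)) hC2 hxk
  have hzX : Q (2 * n - 2) ∈ X := by
    rw [hQN]
    split_ifs
    · exact (hupar 1 le_rfl (by omega)).1 odd_one
    · exact (hupar (k + 1) (by omega) (by omega)).1 hk.add_one
  by_cases hzy : (G k).Adj (Q (2 * n - 2)) y
  · exact hQ.hasRainbowHamPathBetween_of_adj (by omega) hV hyQ hkQ hk1 (by omega) hzy
  obtain ⟨i, hi, hi1, hi2, hiy, hzi⟩ : ∃ i, Odd i ∧ 1 ≤ i ∧ i ≤ 2 * n - 3 ∧ (G i).Adj (u i) y ∧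
      (G k).Adj (Q (2 * n - 2)) (u (i + 1)) := by
    by_contra! hno
    have := ncard_neighborSet_add_inDegD_le hY hyY (hside k hk1 (by omega) _ · hzX) huinj
      (fun i h1 h2 => (hupar i h1 h2).2) hzy hno
    have := hdeg k hk1 (by omega) (Q (2 * n - 2))
    omega
  obtain ⟨j, hj, hQj, hQj', hφj⟩ :=
    hQedge i hi1 (by omega) fun hik => Nat.not_even_iff_odd.mpr hi (hik ▸ hk)
  obtain ⟨Q', φ', hQ', hQ'0, hQ'N, hsub, hfree⟩ :=
    hQ.exists_rotate hj hkQ hk1 (by omega) (hQj ▸ hzi)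
  rw [← hQ'0]
  exact hQ'.hasRainbowHamPathBetween_of_adj (by omega) hV (fun h => hyQ (hsub h)) (hφj ▸ hfree)
    hi1 (by omega) (hQ'N ▸ hQj' ▸ hiy)

theorem stmt13 (n : ℕ) (hn : 3 ≤ n) (G : ℕ → SimpleGraph V) (X Y : Finset V)
    (hdisj : Disjoint X Y) (hcov : ∀ w : V, w ∈ X ∨ w ∈ Y)
    (hX : X.card = n) (hY : Y.card = n)
    (hbip : ∀ i, 1 ≤ i → i ≤ 2 * n - 1 → ∀ a b : V, (G i).Adj a b →
      (a ∈ X ∧ b ∈ Y) ∨ (a ∈ Y ∧ b ∈ X))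
    (hdeg : ∀ i, 1 ≤ i → i ≤ 2 * n - 1 → ∀ a : V, (n + 2) / 2 ≤ ((G i).neighborSet a).ncard)
    (u : ℕ → V) (x y : V)
    (huinj : Set.InjOn u (Set.Icc 1 (2 * n - 2)))
    (hxX : x ∈ X) (hyY : y ∈ Y)
    (huxy : ∀ i, 1 ≤ i → i ≤ 2 * n - 2 → u i ≠ x ∧ u i ≠ y)
    (hupar : ∀ i, 1 ≤ i → i ≤ 2 * n - 2 → (Odd i → u i ∈ X) ∧ (Even i → u i ∈ Y))
    (hucov : ∀ w : V, w = x ∨ w = y ∨ ∃ i, 1 ≤ i ∧ i ≤ 2 * n - 2 ∧ u i = w)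
    (hC : ∀ i, 1 ≤ i → i ≤ 2 * n - 3 → (G i).Adj (u i) (u (i + 1)))
    (hC2 : (G (2 * n - 2)).Adj (u (2 * n - 2)) (u 1))
    (hyin : n / 2 ≤ inDegD G n u y) :
    HasRainbowHamPathBetween G (2 * n - 1) n x y :=
  stmt13_general n hn G X Y hdisj hY hbip hdeg u x y huinj hxX hyY huxy hupar hucov hC hC2 hyin
end

section
/- Let n be odd and let F be the bipartite graph on parts X = {x*} ∪ X_1 ∪ X_2 and Y = {y*} ∪ Y_1 ∪ Y_2 with |X_1| = |X_2| = |Y_1| = |Y_2| = (n-1)/2, whose edges are all edges from x* to Y_1 ∪ Y_2, all edges from y* to X_1 ∪ X_2, and all edges between X_j and Y_j for j = 1, 2. Then F contains no Hamiltonian path from x* to y*. Consequently the collection G_1 = ... = G_{2n-1} = F is not Hamiltonian connected, although δ(F) = (n+1)/2 = ⌈(n+1)/2⌉. -/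
open Finset

variable {V : Type*} [DecidableEq V]

lemma aux_side {V : Type*} [DecidableEq V] (N : ℕ) (v : ℕ → V) (A : Finset V)
    (h1 : v 1 ∈ A)
    (hstep : ∀ i, 1 ≤ i → i + 1 ≤ N → v i ∈ A → v (i + 1) ∈ A)
    (hinj : Set.InjOn v (Set.Iic (N + 1))) (hcard : A.card < N) (hN : 1 ≤ N) : False := by
  have hmem : ∀ i, 1 ≤ i → i ≤ N → v i ∈ A := by
    intro i h1i
    induction i, h1i using Nat.le_induction with
    | base => intro _; exact h1
    | succ i hi ih => intro hiN; exact hstep i hi hiN (ih (by omega))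
  have hsub : (Finset.Icc 1 N).image v ⊆ A := by
    intro b hb
    obtain ⟨i, hi, rfl⟩ := Finset.mem_image.mp hb
    rw [Finset.mem_Icc] at hi
    exact hmem i hi.1 hi.2
  have hinj' : Set.InjOn v (Finset.Icc 1 N : Set ℕ) := by
    apply hinj.mono
    intro i hi
    simp only [Finset.coe_Icc, Set.mem_Icc] at hi
    simp only [Set.mem_Iic]; omega
  have := Finset.card_le_card hsub
  rw [Finset.card_image_of_injOn hinj', Nat.card_Icc] at this
  omega

theorem stmt15 (n : ℕ) (hodd : Odd n) (hn : 3 ≤ n) (F : SimpleGraph V)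
    (X Y : Finset V) (xs ys : V) (X1 X2 Y1 Y2 : Finset V)
    (hdisj : Disjoint X Y) (hcov : ∀ w : V, w ∈ X ∨ w ∈ Y)
    (hX : X.card = n) (hY : Y.card = n)
    (hX12 : Disjoint X1 X2) (hY12 : Disjoint Y1 Y2)
    (hxn : xs ∉ X1 ∪ X2) (hyn : ys ∉ Y1 ∪ Y2)
    (hXu : insert xs (X1 ∪ X2) = X) (hYu : insert ys (Y1 ∪ Y2) = Y)
    (hc1 : X1.card = (n - 1) / 2) (hc2 : X2.card = (n - 1) / 2)
    (hc3 : Y1.card = (n - 1) / 2) (hc4 : Y2.card = (n - 1) / 2)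
    (hadj : ∀ a b : V, F.Adj a b ↔ FAdj xs ys X1 X2 Y1 Y2 a b) :
    (¬ ∃ v : ℕ → V, Set.InjOn v (Set.Iic (2 * n - 1)) ∧
        (∀ w : V, ∃ i ≤ 2 * n - 1, v i = w) ∧
        v 0 = xs ∧ v (2 * n - 1) = ys ∧
        ∀ i < 2 * n - 1, F.Adj (v i) (v (i + 1))) ∧
    (¬ ∀ x ∈ X, ∀ y ∈ Y, HasRainbowHamPathBetween (fun _ => F) (2 * n - 1) n x y) ∧
    (∀ a : V, (n + 1) / 2 ≤ (F.neighborSet a).ncard) ∧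
    (∃ a : V, (F.neighborSet a).ncard = (n + 1) / 2) := by
  have hmod : n % 2 = 1 := Nat.odd_iff.mp hodd
  set m := (n - 1) / 2 with hmdef
  have hnm : n = 2 * m + 1 := by omega
  have hm1 : 1 ≤ m := by omega
  -- basic membership facts
  have hX1X : X1 ⊆ X := by
    rw [← hXu]; exact fun a ha => Finset.mem_insert_of_mem (Finset.mem_union_left _ ha)
  have hX2X : X2 ⊆ X := by
    rw [← hXu]; exact fun a ha => Finset.mem_insert_of_mem (Finset.mem_union_right _ ha)
  have hY1Y : Y1 ⊆ Y := by
    rw [← hYu]; exact fun a ha => Finset.mem_insert_of_mem (Finset.mem_union_left _ ha)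
  have hY2Y : Y2 ⊆ Y := by
    rw [← hYu]; exact fun a ha => Finset.mem_insert_of_mem (Finset.mem_union_right _ ha)
  have hxsX : xs ∈ X := by rw [← hXu]; exact Finset.mem_insert_self _ _
  have hysY : ys ∈ Y := by rw [← hYu]; exact Finset.mem_insert_self _ _
  have hXYd : ∀ a, a ∈ X → a ∉ Y := fun a ha => Finset.disjoint_left.mp hdisj ha
  have hxsys : xs ≠ ys := fun h => hXYd xs hxsX (h ▸ hysY)
  have hxs1 : xs ∉ X1 := fun h => hxn (Finset.mem_union_left _ h)
  have hxs2 : xs ∉ X2 := fun h => hxn (Finset.mem_union_right _ h)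
  have hys1 : ys ∉ Y1 := fun h => hyn (Finset.mem_union_left _ h)
  have hys2 : ys ∉ Y2 := fun h => hyn (Finset.mem_union_right _ h)
  have hxsY1 : xs ∉ Y1 := fun h => hXYd xs hxsX (hY1Y h)
  have hxsY2 : xs ∉ Y2 := fun h => hXYd xs hxsX (hY2Y h)
  have hysX1 : ys ∉ X1 := fun h => hXYd ys (hX1X h) hysY
  have hysX2 : ys ∉ X2 := fun h => hXYd ys (hX2X h) hysY
  have hX1X2 : ∀ a, a ∈ X1 → a ∉ X2 := fun a ha => Finset.disjoint_left.mp hX12 ha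
  have hY1Y2d : ∀ a, a ∈ Y1 → a ∉ Y2 := fun a ha => Finset.disjoint_left.mp hY12 ha
  -- part 1: no Hamiltonian path from xs to ys
  have key : ¬ ∃ v : ℕ → V, Set.InjOn v (Set.Iic (2 * n - 1)) ∧
      (∀ w : V, ∃ i ≤ 2 * n - 1, v i = w) ∧
      v 0 = xs ∧ v (2 * n - 1) = ys ∧
      ∀ i < 2 * n - 1, F.Adj (v i) (v (i + 1)) := by
    rintro ⟨v, hinj, -, hv0, hvend, hedge⟩
    have hne : ∀ i, 1 ≤ i → i ≤ 2 * n - 2 → v i ≠ xs ∧ v i ≠ ys := by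
      intro i h1 h2
      constructor
      · intro h
        rw [← hv0] at h
        have := hinj (Set.mem_Iic.mpr (by omega)) (Set.mem_Iic.mpr (by omega)) h
        omega
      · intro h
        rw [← hvend] at h
        have := hinj (Set.mem_Iic.mpr (by omega)) (Set.mem_Iic.mpr (le_refl _)) h
        omega
    have hsame : ∀ a b : V, a ≠ xs → a ≠ ys → b ≠ xs → b ≠ ys → F.Adj a b →
        ((a ∈ X1 ∪ Y1 ∧ b ∈ X1 ∪ Y1) ∨ (a ∈ X2 ∪ Y2 ∧ b ∈ X2 ∪ Y2)) := by
      intro a b ha1 ha2 hb1 hb2 hab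
      rw [hadj] at hab
      simp only [FAdj] at hab
      rcases hab with ⟨h, _⟩ | ⟨h, _⟩ | ⟨h, _⟩ | ⟨h, _⟩ | ⟨h1, h2⟩ | ⟨h1, h2⟩ | ⟨h1, h2⟩ | ⟨h1, h2⟩
      · exact absurd h ha1
      · exact absurd h hb1
      · exact absurd h ha2
      · exact absurd h hb2
      · exact Or.inl ⟨Finset.mem_union_left _ h1, Finset.mem_union_right _ h2⟩
      · exact Or.inl ⟨Finset.mem_union_right _ h2, Finset.mem_union_left _ h1⟩
      · exact Or.inr ⟨Finset.mem_union_left _ h1, Finset.mem_union_right _ h2⟩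
      · exact Or.inr ⟨Finset.mem_union_right _ h2, Finset.mem_union_left _ h1⟩
    have hside : ∀ a : V, a ∈ X1 ∪ Y1 → a ∈ X2 ∪ Y2 → False := by
      intro a h1 h2
      rcases Finset.mem_union.mp h1 with h1 | h1 <;> rcases Finset.mem_union.mp h2 with h2 | h2
      · exact hX1X2 a h1 h2
      · exact hXYd a (hX1X h1) (hY2Y h2)
      · exact hXYd a (hX2X h2) (hY1Y h1)
      · exact hY1Y2d a h1 h2
    have h01 : F.Adj (v 0) (v 1) := hedge 0 (by omega)
    rw [hv0, hadj] at h01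
    simp only [FAdj] at h01
    have hv1x : v 1 ≠ xs := (hne 1 (by omega) (by omega)).1
    have hv1 : v 1 ∈ Y1 ∪ Y2 := by
      rcases h01 with ⟨_, h⟩ | ⟨h, _⟩ | ⟨h, _⟩ | ⟨_, h⟩ | ⟨h, _⟩ | ⟨_, h⟩ | ⟨h, _⟩ | ⟨_, h⟩
      · exact h
      · exact absurd h hv1x
      · exact absurd h hxsys
      · exact absurd h hxn
      · exact absurd h hxs1
      · exact absurd h hxsY1
      · exact absurd h hxs2
      · exact absurd h hxsY2
    have hInj' : Set.InjOn v (Set.Iic ((2 * n - 2) + 1)) := by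
      have he : (2 * n - 2) + 1 = 2 * n - 1 := by omega
      rw [he]; exact hinj
    have hcard1 : (X1 ∪ Y1).card < 2 * n - 2 := by
      have := Finset.card_union_le X1 Y1
      omega
    have hcard2 : (X2 ∪ Y2).card < 2 * n - 2 := by
      have := Finset.card_union_le X2 Y2
      omega
    rcases Finset.mem_union.mp hv1 with h1 | h1
    · refine aux_side (2 * n - 2) v (X1 ∪ Y1) (Finset.mem_union_right _ h1)
        (fun i hi1 hi2 hvi => ?_) hInj' hcard1 (by omega)
      have hne_i := hne i hi1 (by omega)
      have hne_i1 := hne (i + 1) (by omega) hi2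
      have hadj_i := hedge i (by omega)
      rcases hsame _ _ hne_i.1 hne_i.2 hne_i1.1 hne_i1.2 hadj_i with ⟨_, h⟩ | ⟨h, _⟩
      · exact h
      · exact (hside _ hvi h).elim
    · refine aux_side (2 * n - 2) v (X2 ∪ Y2) (Finset.mem_union_right _ h1)
        (fun i hi1 hi2 hvi => ?_) hInj' hcard2 (by omega)
      have hne_i := hne i hi1 (by omega)
      have hne_i1 := hne (i + 1) (by omega) hi2
      have hadj_i := hedge i (by omega)
      rcases hsame _ _ hne_i.1 hne_i.2 hne_i1.1 hne_i1.2 hadj_i with ⟨h, _⟩ | ⟨_, h⟩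
      · exact (hside _ h hvi).elim
      · exact h
  -- degree computations
  have degX1 : ∀ a ∈ X1, F.neighborSet a = ↑(insert ys Y1) := by
    intro a ha
    have h1 : a ≠ xs := fun h => hxs1 (h ▸ ha)
    have h2 : a ≠ ys := fun h => hysX1 (h ▸ ha)
    have h3 : a ∉ Y1 := fun h => hXYd a (hX1X ha) (hY1Y h)
    have h4 : a ∉ Y2 := fun h => hXYd a (hX1X ha) (hY2Y h)
    have h5 : a ∉ X2 := hX1X2 a ha
    ext b
    simp only [SimpleGraph.mem_neighborSet, hadj, FAdj, Finset.coe_insert,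
      Set.mem_insert_iff, Finset.mem_coe, Finset.mem_union]
    constructor
    · rintro (⟨h, -⟩ | ⟨-, h | h⟩ | ⟨h, -⟩ | ⟨h, -⟩ | ⟨-, h⟩ | ⟨-, h⟩ | ⟨h, -⟩ | ⟨-, h⟩)
      · exact absurd h h1
      · exact absurd h h3
      · exact absurd h h4
      · exact absurd h h2
      · exact Or.inl h
      · exact Or.inr h
      · exact absurd h h3
      · exact absurd h h5
      · exact absurd h h4
    · rintro (rfl | h)
      · exact Or.inr (Or.inr (Or.inr (Or.inl ⟨rfl, Or.inl ha⟩)))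
      · exact Or.inr (Or.inr (Or.inr (Or.inr (Or.inl ⟨ha, h⟩))))
  have degX2 : ∀ a ∈ X2, F.neighborSet a = ↑(insert ys Y2) := by
    intro a ha
    have h1 : a ≠ xs := fun h => hxs2 (h ▸ ha)
    have h2 : a ≠ ys := fun h => hysX2 (h ▸ ha)
    have h3 : a ∉ Y1 := fun h => hXYd a (hX2X ha) (hY1Y h)
    have h4 : a ∉ Y2 := fun h => hXYd a (hX2X ha) (hY2Y h)
    have h5 : a ∉ X1 := fun h => hX1X2 a h ha
    ext b
    simp only [SimpleGraph.mem_neighborSet, hadj, FAdj, Finset.coe_insert,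
      Set.mem_insert_iff, Finset.mem_coe, Finset.mem_union]
    constructor
    · rintro (⟨h, -⟩ | ⟨-, h | h⟩ | ⟨h, -⟩ | ⟨h, -⟩ | ⟨h, -⟩ | ⟨-, h⟩ | ⟨-, h⟩ | ⟨-, h⟩)
      · exact absurd h h1
      · exact absurd h h3
      · exact absurd h h4
      · exact absurd h h2
      · exact Or.inl h
      · exact absurd h h5
      · exact absurd h h3
      · exact Or.inr h
      · exact absurd h h4
    · rintro (rfl | h)
      · exact Or.inr (Or.inr (Or.inr (Or.inl ⟨rfl, Or.inr ha⟩)))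
      · exact Or.inr (Or.inr (Or.inr (Or.inr (Or.inr (Or.inr (Or.inl ⟨ha, h⟩))))))
  have degY1 : ∀ a ∈ Y1, F.neighborSet a = ↑(insert xs X1) := by
    intro a ha
    have h1 : a ≠ xs := fun h => hxsY1 (h ▸ ha)
    have h2 : a ≠ ys := fun h => hys1 (h ▸ ha)
    have h3 : a ∉ X1 := fun h => hXYd a (hX1X h) (hY1Y ha)
    have h4 : a ∉ X2 := fun h => hXYd a (hX2X h) (hY1Y ha)
    have h5 : a ∉ Y2 := hY1Y2d a ha
    ext b
    simp only [SimpleGraph.mem_neighborSet, hadj, FAdj, Finset.coe_insert,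
      Set.mem_insert_iff, Finset.mem_coe, Finset.mem_union]
    constructor
    · rintro (⟨h, -⟩ | ⟨h, -⟩ | ⟨h, -⟩ | ⟨-, h | h⟩ | ⟨h, -⟩ | ⟨h, -⟩ | ⟨h, -⟩ | ⟨-, h⟩)
      · exact absurd h h1
      · exact Or.inl h
      · exact absurd h h2
      · exact absurd h h3
      · exact absurd h h4
      · exact absurd h h3
      · exact Or.inr h
      · exact absurd h h4
      · exact absurd h h5
    · rintro (rfl | h)
      · exact Or.inr (Or.inl ⟨rfl, Or.inl ha⟩)
      · exact Or.inr (Or.inr (Or.inr (Or.inr (Or.inr (Or.inl ⟨h, ha⟩)))))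
  have degY2 : ∀ a ∈ Y2, F.neighborSet a = ↑(insert xs X2) := by
    intro a ha
    have h1 : a ≠ xs := fun h => hxsY2 (h ▸ ha)
    have h2 : a ≠ ys := fun h => hys2 (h ▸ ha)
    have h3 : a ∉ X1 := fun h => hXYd a (hX1X h) (hY2Y ha)
    have h4 : a ∉ X2 := fun h => hXYd a (hX2X h) (hY2Y ha)
    have h5 : a ∉ Y1 := fun h => hY1Y2d a h ha
    ext b
    simp only [SimpleGraph.mem_neighborSet, hadj, FAdj, Finset.coe_insert,
      Set.mem_insert_iff, Finset.mem_coe, Finset.mem_union]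
    constructor
    · rintro (⟨h, -⟩ | ⟨h, -⟩ | ⟨h, -⟩ | ⟨-, h | h⟩ | ⟨h, -⟩ | ⟨-, h⟩ | ⟨h, -⟩ | ⟨h, -⟩)
      · exact absurd h h1
      · exact Or.inl h
      · exact absurd h h2
      · exact absurd h h3
      · exact absurd h h4
      · exact absurd h h3
      · exact absurd h h5
      · exact absurd h h4
      · exact Or.inr h
    · rintro (rfl | h)
      · exact Or.inr (Or.inl ⟨rfl, Or.inr ha⟩)
      · exact Or.inr (Or.inr (Or.inr (Or.inr (Or.inr (Or.inr (Or.inr ⟨h, ha⟩))))))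
  have degxs : F.neighborSet xs = ↑(Y1 ∪ Y2) := by
    ext b
    simp only [SimpleGraph.mem_neighborSet, hadj, FAdj, Finset.coe_union,
      Set.mem_union, Finset.mem_coe, Finset.mem_union]
    constructor
    · rintro (⟨-, h⟩ | ⟨-, h | h⟩ | ⟨h, -⟩ | ⟨-, h | h⟩ | ⟨h, -⟩ | ⟨-, h⟩ | ⟨h, -⟩ | ⟨-, h⟩)
      · exact h
      · exact absurd h hxsY1
      · exact absurd h hxsY2
      · exact absurd h hxsys
      · exact absurd h hxs1
      · exact absurd h hxs2
      · exact absurd h hxs1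
      · exact absurd h hxsY1
      · exact absurd h hxs2
      · exact absurd h hxsY2
    · intro h
      exact Or.inl ⟨trivial, h⟩
  have degys : F.neighborSet ys = ↑(X1 ∪ X2) := by
    ext b
    simp only [SimpleGraph.mem_neighborSet, hadj, FAdj, Finset.coe_union,
      Set.mem_union, Finset.mem_coe, Finset.mem_union]
    constructor
    · rintro (⟨h, -⟩ | ⟨-, h | h⟩ | ⟨-, h⟩ | ⟨-, h | h⟩ | ⟨h, -⟩ | ⟨-, h⟩ | ⟨h, -⟩ | ⟨-, h⟩)
      · exact absurd h.symm hxsys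
      · exact absurd h hys1
      · exact absurd h hys2
      · exact h
      · exact absurd h hysX1
      · exact absurd h hysX2
      · exact absurd h hysX1
      · exact absurd h hys1
      · exact absurd h hysX2
      · exact absurd h hys2
    · intro h
      exact Or.inr (Or.inr (Or.inl ⟨trivial, h⟩))
  have degX1c : ∀ a ∈ X1, (F.neighborSet a).ncard = m + 1 := by
    intro a ha
    rw [degX1 a ha, Set.ncard_coe_finset, Finset.card_insert_of_notMem hys1, hc3]
  have degX2c : ∀ a ∈ X2, (F.neighborSet a).ncard = m + 1 := by
    intro a ha
    rw [degX2 a ha, Set.ncard_coe_finset, Finset.card_insert_of_notMem hys2, hc4]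
  have degY1c : ∀ a ∈ Y1, (F.neighborSet a).ncard = m + 1 := by
    intro a ha
    rw [degY1 a ha, Set.ncard_coe_finset, Finset.card_insert_of_notMem hxs1, hc1]
  have degY2c : ∀ a ∈ Y2, (F.neighborSet a).ncard = m + 1 := by
    intro a ha
    rw [degY2 a ha, Set.ncard_coe_finset, Finset.card_insert_of_notMem hxs2, hc2]
  have degxsc : (F.neighborSet xs).ncard = m + m := by
    rw [degxs, Set.ncard_coe_finset, Finset.card_union_of_disjoint hY12, hc3, hc4]
  have degysc : (F.neighborSet ys).ncard = m + m := by
    rw [degys, Set.ncard_coe_finset, Finset.card_union_of_disjoint hX12, hc1, hc2]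
  have hhalf : (n + 1) / 2 = m + 1 := by omega
  refine ⟨key, ?_, ?_, ?_⟩
  · intro h
    have := h xs hxsX ys hysY
    simp only [HasRainbowHamPathBetween, IsRainbowPath] at this
    obtain ⟨v, φ, ⟨hvinj, -, -, hedges⟩, hv0, hvend, hsurj⟩ := this
    exact key ⟨v, hvinj, hsurj, hv0, hvend, hedges⟩
  · intro a
    rw [hhalf]
    rcases hcov a with h | h
    · rw [← hXu] at h
      rcases Finset.mem_insert.mp h with rfl | h
      · rw [degxsc]; omega
      · rcases Finset.mem_union.mp h with h | h
        · rw [degX1c a h]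
        · rw [degX2c a h]
    · rw [← hYu] at h
      rcases Finset.mem_insert.mp h with rfl | h
      · rw [degysc]; omega
      · rcases Finset.mem_union.mp h with h | h
        · rw [degY1c a h]
        · rw [degY2c a h]
  · obtain ⟨a, ha⟩ : X1.Nonempty := Finset.card_pos.mp (by omega)
    exact ⟨a, by rw [degX1c a ha, hhalf]⟩
end
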